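/- arXiv:2512.19515 — 11 statements merged into one kernel-verified Lean document; each statement's English description precedes it below -/
import Mathlib

section
/- Let F be a field, let V be a linear subspace of F^n of dimension d, and let s be a natural number. Then the number of vectors v ∈ V all of whose coordinates are 0 or 1 and whose Hamming weight is at most s is at most ∑_{i=0}^{s} C(d, i). -/
open Module Submodule Set

theorem exists_good_coords (F : Type*) [Field F] (n d : ℕ)
    (V : Submodule F (Fin n → F)) (hd : Module.finrank F V = d) :
    ∃ T : Finset (Fin n), T.card = d ∧
      ∀ v ∈ V, (∀ i ∈ T, v i = 0) → v = 0 := by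
  classical
  set f : Fin n → Module.Dual F V := fun i => (LinearMap.proj i).comp V.subtype with hf
  obtain ⟨b, hbsub, hbspan, hbind⟩ := exists_linearIndependent F (Set.range f)
  -- coannihilator of the span of all coordinate functionals is trivial
  have hco : (span F (Set.range f)).dualCoannihilator = ⊥ := by
    rw [eq_bot_iff]
    intro v hv
    rw [Submodule.mem_dualCoannihilator] at hv
    have h0 : ∀ i, (v : Fin n → F) i = 0 := fun i =>
      hv (f i) (subset_span (Set.mem_range_self i))
    have : (v : Fin n → F) = 0 := funext h0
    simpa [Submodule.mem_bot] using Subtype.ext this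
  have hfin : Module.finrank F (span F (Set.range f)) = d := by
    have := Subspace.finrank_add_finrank_dualCoannihilator_eq (span F (Set.range f))
    rw [hco, finrank_bot, hd] at this
    simpa using this
  have hbfin : b.Finite := (Set.finite_range f).subset hbsub
  have hbfintype : Fintype b := hbfin.fintype
  have hcard : b.toFinset.card = d := by
    rw [← finrank_span_set_eq_card hbind, hbspan, hfin]
  -- choose indices
  have hchoice : ∀ φ ∈ b, ∃ i, f i = φ := fun φ hφ => hbsub hφ
  set g : {φ : Module.Dual F V // φ ∈ b.toFinset} → Fin n := fun φ =>
    (hchoice φ.1 (Set.mem_toFinset.mp φ.2)).choose with hg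
  have hgf : ∀ φ, f (g φ) = φ.1 := fun φ =>
    (hchoice φ.1 (Set.mem_toFinset.mp φ.2)).choose_spec
  refine ⟨b.toFinset.attach.image g, ?_, ?_⟩
  · rw [Finset.card_image_of_injOn, Finset.card_attach, hcard]
    intro x _ y _ hxy
    have := hgf x
    rw [hxy, hgf y] at this
    exact Subtype.ext this.symm
  · intro v hv hzero
    have hmem : (⟨v, hv⟩ : V) ∈ (span F b).dualCoannihilator := by
      rw [Submodule.mem_dualCoannihilator]
      intro φ hφ
      induction hφ using Submodule.span_induction with
      | mem ψ hψ =>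
        have hψ' : ψ ∈ b.toFinset := by simpa using hψ
        have := hzero (g ⟨ψ, hψ'⟩)
          (Finset.mem_image_of_mem g (Finset.mem_attach _ ⟨ψ, hψ'⟩))
        have h2 : f (g ⟨ψ, hψ'⟩) = ψ := hgf ⟨ψ, hψ'⟩
        rw [← h2]
        simpa [hf] using this
      | zero => simp
      | add ψ χ _ _ h1 h2 => simp [h1, h2]
      | smul c ψ _ h1 => simp [h1]
    rw [hbspan, hco, Submodule.mem_bot] at hmem
    exact congrArg Subtype.val hmem

/-- Let `F` be a field, `V` a linear subspace of `F^n` of dimension `d`, and `s` a natural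
number. Then the number of vectors `v ∈ V` all of whose coordinates are `0` or `1` and whose
Hamming weight is at most `s` is at most `∑_{i=0}^{s} C(d, i)`. -/
theorem stmt_0 (F : Type*) [Field F] (n d s : ℕ)
    (V : Submodule F (Fin n → F)) (hd : Module.finrank F V = d) :
    {v : Fin n → F | v ∈ V ∧ (∀ i, v i = 0 ∨ v i = 1) ∧
      {i | v i ≠ 0}.ncard ≤ s}.ncard ≤ ∑ i ∈ Finset.range (s + 1), d.choose i := by
  classical
  obtain ⟨T, hT, hinj⟩ := exists_good_coords F n d V hd
  set gm : (Fin n → F) → Finset (Fin n) := fun v => T.filter (fun i => v i ≠ 0) with hgm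
  set t : Set (Finset (Fin n)) := ↑(T.powerset.filter (fun A => A.card ≤ s)) with ht
  have hmap : ∀ v ∈ {v : Fin n → F | v ∈ V ∧ (∀ i, v i = 0 ∨ v i = 1) ∧
      {i | v i ≠ 0}.ncard ≤ s}, gm v ∈ t := by
    rintro v ⟨hv, h01, hw⟩
    simp only [ht, Finset.coe_filter, Set.mem_setOf_eq, Finset.mem_powerset]
    refine ⟨Finset.filter_subset _ _, le_trans ?_ hw⟩
    rw [Set.ncard_eq_toFinset_card' {i | v i ≠ 0}]
    apply Finset.card_le_card
    intro i hi
    simp only [hgm, Finset.mem_filter] at hi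
    simpa using hi.2
  have hinjOn : Set.InjOn gm {v : Fin n → F | v ∈ V ∧ (∀ i, v i = 0 ∨ v i = 1) ∧
      {i | v i ≠ 0}.ncard ≤ s} := by
    rintro v ⟨hv, hv01, -⟩ w ⟨hw, hw01, -⟩ heq
    have heq' : ∀ i ∈ T, v i = w i := by
      intro i hiT
      have : (i ∈ gm v) = (i ∈ gm w) := by rw [heq]
      simp only [hgm, Finset.mem_filter, eq_iff_iff] at this
      rcases hv01 i with h1 | h1 <;> rcases hw01 i with h2 | h2
      · rw [h1, h2]
      · exact absurd (h1 ▸ (this.mpr ⟨hiT, h2 ▸ one_ne_zero⟩).2) (by simp)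
      · exact absurd (h2 ▸ (this.mp ⟨hiT, h1 ▸ one_ne_zero⟩).2) (by simp)
      · rw [h1, h2]
    have hsub : v - w ∈ V := V.sub_mem hv hw
    have : v - w = 0 := hinj _ hsub (fun i hi => by
      simp [heq' i hi])
    exact sub_eq_zero.mp this
  refine le_trans (Set.ncard_le_ncard_of_injOn gm hmap hinjOn (Set.toFinite t)) ?_
  rw [ht, Set.ncard_coe_finset]
  have hsplit : T.powerset.filter (fun A => A.card ≤ s) =
      (Finset.range (s + 1)).biUnion (fun i => Finset.powersetCard i T) := by
    ext A
    simp only [Finset.mem_filter, Finset.mem_powerset, Finset.mem_biUnion, Finset.mem_range,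
      Finset.mem_powersetCard, Nat.lt_succ_iff]
    constructor
    · rintro ⟨h1, h2⟩; exact ⟨A.card, h2, h1, rfl⟩
    · rintro ⟨i, hi, h1, rfl⟩; exact ⟨h1, hi⟩
  rw [hsplit, Finset.card_biUnion]
  · apply le_of_eq
    refine Finset.sum_congr rfl fun i _ => ?_
    rw [Finset.card_powersetCard, hT]
  · intro i _ j _ hij
    rw [Function.onFun, Finset.disjoint_left]
    intro A hA hA'
    rw [Finset.mem_powersetCard] at hA hA'
    exact hij (hA.2 ▸ hA'.2 ▸ rfl)
end

section
/- Let M be an n×m matrix over the field F₂ with two elements and let d be a natural number. Suppose that for every nonzero vector c ∈ F₂^n, the vector Mᵀc ∈ F₂^m has Hamming weight greater than d. Then for every linear subspace V of F₂^n of dimension strictly less than n, the number of indices i ∈ {1,…,m} such that the i-th column of M lies in V is at most m − d. -/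
open Matrix

/-!
A proper subspace `V` of `K^ι` lies in the kernel of a nonzero functional `v ↦ c ⬝ᵥ v`.
The columns of `M` lying in `V` then sit at coordinates where `Mᵀc` vanishes, and there are
`m - wt(Mᵀc) ≤ m - d` of those.
-/

theorem Submodule.exists_ne_zero_dotProduct_eq_zero_of_lt_top {K ι : Type*} [Field K] [Fintype ι]
    [DecidableEq ι] {V : Submodule K (ι → K)} (hV : V < ⊤) :
    ∃ c ≠ 0, ∀ v ∈ V, c ⬝ᵥ v = 0 := by
  obtain ⟨f, hf0, hVf⟩ := V.exists_le_ker_of_lt_top hV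
  refine ⟨(dotProductEquiv K ι).symm f, by simpa using hf0, fun v hv => ?_⟩
  simpa [← dotProductEquiv_apply_apply] using hVf hv

theorem card_filter_eq_zero_eq_sub_hammingNorm {ι K : Type*} [Fintype ι] [Zero K] [DecidableEq K]
    (x : ι → K) : (Finset.univ.filter fun i => x i = 0).card = Fintype.card ι - hammingNorm x := by
  have := Finset.card_filter_add_card_filter_not (s := Finset.univ) (fun i => x i = 0)
  rw [Finset.card_univ] at this
  simp only [hammingNorm, ne_eq]
  omega

theorem ncard_setOf_col_mem_le {K ι κ : Type*} [Field K] [Fintype ι] [Fintype κ] [DecidableEq K]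
    (M : Matrix ι κ K) {V : Submodule K (ι → K)} {c : ι → K} (hc : ∀ v ∈ V, c ⬝ᵥ v = 0) :
    {j | (fun i => M i j) ∈ V}.ncard ≤ Fintype.card κ - hammingNorm (Mᵀ *ᵥ c) := by
  rw [← card_filter_eq_zero_eq_sub_hammingNorm, ← Set.ncard_coe_finset]
  refine Set.ncard_le_ncard (fun j hj => ?_) (Set.toFinite _)
  simpa [mulVec, dotProduct_comm] using hc _ hj

/-- If for every nonzero `c ∈ F₂^n` the vector `Mᵀc ∈ F₂^m` has Hamming weight greater
than `d`, then for every linear subspace `V` of `F₂^n` of dimension strictly less than `n`,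
the number of indices `i ∈ [m]` such that the `i`-th column of `M` lies in `V` is at most
`m − d`. -/
theorem stmt_3 (n m d : ℕ) (M : Matrix (Fin n) (Fin m) (ZMod 2))
    (h : ∀ c : Fin n → ZMod 2, c ≠ 0 →
      d < (Finset.univ.filter fun j => Mᵀ.mulVec c j ≠ 0).card) :
    ∀ V : Submodule (ZMod 2) (Fin n → ZMod 2), Module.finrank (ZMod 2) V < n →
      {i : Fin m | (fun r => M r i) ∈ V}.ncard ≤ m - d := by
  intro V hV
  have hV_lt_top : V < ⊤ := lt_top_iff_ne_top.2 fun hV_top => by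
    rw [hV_top, finrank_top, Module.finrank_fin_fun] at hV
    exact hV.false
  obtain ⟨c, hc0, hcV⟩ := V.exists_ne_zero_dotProduct_eq_zero_of_lt_top hV_lt_top
  have hweight : d < hammingNorm (Mᵀ *ᵥ c) := h c hc0
  have hcols := ncard_setOf_col_mem_le M hcV
  rw [Fintype.card_fin] at hcols
  omega
end

section
/- Let l ≥ 1 and m ≥ 1 be natural numbers, let q = 2^l, let F_q be the finite field with q elements, let (b_1,…,b_l) be a basis of F_q as a vector space over F₂, let φ : F_q → F₂^l send each element to its coordinate vector with respect to this basis, and let γ : F_q^m → F₂^{lm} apply φ coordinatewise. Let L be an F_q-linear subspace of F_q^m with {0} ≠ L ≠ F_q^m, and let C = γ(L), an F₂-linear subspace of F₂^{lm}. Then d(L) ≤ d(C) ≤ l·d(L), and d(L⊥) ≤ d(C⊥) ≤ l·d(L⊥), where L⊥ is the dual code of L in F_q^m and C⊥ is the dual code of C in F₂^{lm}. -/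
noncomputable def hammingWt {ι : Type*} [Fintype ι] {F : Type*} [Zero F] (v : ι → F) : ℕ :=
  {i | v i ≠ 0}.ncard

noncomputable def minDist {ι : Type*} [Fintype ι] {F : Type*} [Zero F] (C : Set (ι → F)) : ℕ :=
  sInf {k | ∃ v ∈ C, v ≠ 0 ∧ hammingWt v = k}

def dualCode {ι : Type*} [Fintype ι] {F : Type*} [CommRing F] (C : Set (ι → F)) :
    Set (ι → F) :=
  {w | ∀ v ∈ C, ∑ i, v i * w i = 0}

namespace Stmt8Aux

variable {l m : ℕ}

/-- coordinatewise expansion -/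
noncomputable def gam (b : Module.Basis (Fin l) (ZMod 2) (GaloisField 2 l))
    (v : Fin m → GaloisField 2 l) : Fin m × Fin l → ZMod 2 :=
  fun p => b.repr (v p.1) p.2

lemma gam_zero (b : Module.Basis (Fin l) (ZMod 2) (GaloisField 2 l)) :
    gam (m := m) b 0 = 0 := by
  ext p; simp [gam]

lemma gam_inj (b : Module.Basis (Fin l) (ZMod 2) (GaloisField 2 l)) :
    Function.Injective (gam (m := m) b) := by
  intro u v h
  funext i
  apply b.repr.injective
  ext j
  exact congrFun h (i, j)

lemma hammingWt_eq {ι : Type*} [Fintype ι] {F : Type*} [Zero F] (v : ι → F)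
    [DecidablePred fun i => v i ≠ 0] :
    hammingWt v = (Finset.univ.filter fun i => v i ≠ 0).card := by
  rw [hammingWt, ← Set.ncard_coe_finset]
  congr 1
  ext i
  simp

lemma wt_le_gam (b : Module.Basis (Fin l) (ZMod 2) (GaloisField 2 l))
    (v : Fin m → GaloisField 2 l) :
    hammingWt v ≤ hammingWt (gam b v) := by
  classical
  rw [hammingWt_eq, hammingWt_eq]
  haveI : Nonempty (Fin l) := b.index_nonempty
  apply Finset.card_le_card_of_injOn
    (fun i => (i, if h : ∃ j, b.repr (v i) j ≠ 0 then h.choose else Classical.arbitrary (Fin l)))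
  · intro i hi
    simp only [Finset.mem_coe, Finset.mem_filter, Finset.mem_univ, true_and] at hi ⊢
    have h : ∃ j, b.repr (v i) j ≠ 0 := by
      by_contra hcon
      push_neg at hcon
      apply hi
      apply b.repr.map_eq_zero_iff.mp
      ext j; exact hcon j
    rw [dif_pos h]
    exact h.choose_spec
  · intro x _ y _ hxy
    exact congrArg Prod.fst hxy

lemma gam_wt_le (b : Module.Basis (Fin l) (ZMod 2) (GaloisField 2 l))
    (v : Fin m → GaloisField 2 l) :
    hammingWt (gam b v) ≤ l * hammingWt v := by
  classical
  rw [hammingWt_eq, hammingWt_eq]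
  have hsub : (Finset.univ.filter fun p => gam b v p ≠ 0) ⊆
      (Finset.univ.filter fun i => v i ≠ 0) ×ˢ (Finset.univ : Finset (Fin l)) := by
    intro p hp
    simp only [Finset.mem_filter, Finset.mem_univ, true_and] at hp
    simp only [Finset.mem_product, Finset.mem_filter, Finset.mem_univ, true_and]
    refine ⟨?_, trivial⟩
    intro h0
    apply hp
    simp [gam, h0]
  calc (Finset.univ.filter fun p => gam b v p ≠ 0).card
      ≤ ((Finset.univ.filter fun i => v i ≠ 0) ×ˢ (Finset.univ : Finset (Fin l))).card :=
        Finset.card_le_card hsub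
    _ = (Finset.univ.filter fun i => v i ≠ 0).card * l := by
        rw [Finset.card_product, Finset.card_univ, Fintype.card_fin]
    _ = l * (Finset.univ.filter fun i => v i ≠ 0).card := Nat.mul_comm _ _

lemma minDist_bounds (b : Module.Basis (Fin l) (ZMod 2) (GaloisField 2 l))
    (S : Set (Fin m → GaloisField 2 l)) (hS : ∃ v ∈ S, v ≠ 0) :
    minDist S ≤ minDist (gam b '' S) ∧ minDist (gam b '' S) ≤ l * minDist S := by
  obtain ⟨v0, hv0S, hv0⟩ := hS
  have hne : {k | ∃ v ∈ S, v ≠ 0 ∧ hammingWt v = k}.Nonempty := ⟨_, v0, hv0S, hv0, rfl⟩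
  constructor
  · apply le_csInf
    · refine ⟨hammingWt (gam b v0), gam b v0, ⟨v0, hv0S, rfl⟩, ?_, rfl⟩
      intro h
      exact hv0 (gam_inj b (h.trans (gam_zero b).symm))
    · rintro k ⟨c, ⟨v, hvS, rfl⟩, hc0, rfl⟩
      have hv0' : v ≠ 0 := by rintro rfl; exact hc0 (gam_zero b)
      exact le_trans (Nat.sInf_le ⟨v, hvS, hv0', rfl⟩) (wt_le_gam b v)
  · obtain ⟨v, hvS, hvne, hw⟩ := Nat.sInf_mem hne
    have h1 : minDist (gam b '' S) ≤ hammingWt (gam b v) := by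
      refine Nat.sInf_le ⟨gam b v, ⟨v, hvS, rfl⟩, ?_, rfl⟩
      intro h
      exact hvne (gam_inj b (h.trans (gam_zero b).symm))
    calc minDist (gam b '' S) ≤ hammingWt (gam b v) := h1
      _ ≤ l * hammingWt v := gam_wt_le b v
      _ = l * minDist S := by rw [hw]; rfl

variable (l) in
noncomputable def Tr : LinearMap.BilinForm (ZMod 2) (GaloisField 2 l) :=
  Algebra.traceForm (ZMod 2) (GaloisField 2 l)

lemma Tr_nondeg : (Tr l).Nondegenerate := traceForm_nondegenerate _ _

variable (l) in
noncomputable def dbasis (b : Module.Basis (Fin l) (ZMod 2) (GaloisField 2 l)) :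
    Module.Basis (Fin l) (ZMod 2) (GaloisField 2 l) :=
  (Tr l).dualBasis Tr_nondeg b

lemma key_identity (b : Module.Basis (Fin l) (ZMod 2) (GaloisField 2 l))
    (x y : GaloisField 2 l) :
    ∑ j, b.repr x j * (dbasis l b).repr y j = Algebra.trace (ZMod 2) (GaloisField 2 l) (x * y) := by
  have h1 : ∀ j, (dbasis l b).repr y j = Tr l y (b j) := fun j =>
    LinearMap.BilinForm.dualBasis_repr_apply _ _ _ _
  calc ∑ j, b.repr x j * (dbasis l b).repr y j
      = ∑ j, b.repr x j • (Tr l y) (b j) := by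
        simp only [h1, smul_eq_mul]
    _ = (Tr l y) (∑ j, b.repr x j • b j) := by
        rw [map_sum]
        exact Finset.sum_congr rfl fun j _ => (map_smul _ _ _).symm
    _ = (Tr l y) x := by rw [b.sum_repr x]
    _ = Algebra.trace (ZMod 2) (GaloisField 2 l) (x * y) := by
        rw [Tr, Algebra.traceForm_apply, mul_comm]

lemma sum_gam (b : Module.Basis (Fin l) (ZMod 2) (GaloisField 2 l))
    (v w : Fin m → GaloisField 2 l) :
    ∑ p : Fin m × Fin l, gam b v p * gam (dbasis l b) w p
      = Algebra.trace (ZMod 2) (GaloisField 2 l) (∑ i, v i * w i) := by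
  rw [Fintype.sum_prod_type, map_sum]
  exact Finset.sum_congr rfl fun i _ => key_identity b (v i) (w i)

lemma gam_surj (b : Module.Basis (Fin l) (ZMod 2) (GaloisField 2 l)) :
    Function.Surjective (gam (m := m) b) := by
  intro c
  refine ⟨fun i => b.repr.symm (Finsupp.equivFunOnFinite.symm (fun j => c (i, j))), ?_⟩
  funext p
  simp [gam]

lemma dual_image (b : Module.Basis (Fin l) (ZMod 2) (GaloisField 2 l))
    (L : Submodule (GaloisField 2 l) (Fin m → GaloisField 2 l)) :
    dualCode (gam b '' (L : Set (Fin m → GaloisField 2 l)))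
      = gam (dbasis l b) '' dualCode (L : Set (Fin m → GaloisField 2 l)) := by
  ext c
  constructor
  · intro hc
    obtain ⟨w, rfl⟩ := gam_surj (dbasis l b) c
    refine ⟨w, ?_, rfl⟩
    intro v hv
    -- show ∑ i, v i * w i = 0 using nondegeneracy
    set s := ∑ i, v i * w i with hs
    apply Tr_nondeg.1
    intro α
    have hαv : α • v ∈ L := L.smul_mem α hv
    have h0 := hc (gam b (α • v)) ⟨α • v, hαv, rfl⟩
    rw [sum_gam] at h0
    have : ∑ i, (α • v) i * w i = α * s := by
      rw [hs, Finset.mul_sum]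
      exact Finset.sum_congr rfl fun i _ => by simp [mul_assoc]
    rw [this] at h0
    rw [Tr, Algebra.traceForm_apply, mul_comm]
    exact h0
  · rintro ⟨w, hw, rfl⟩ v' ⟨v, hv, rfl⟩
    rw [sum_gam, hw v hv, map_zero]

lemma exists_dual_ne (L : Submodule (GaloisField 2 l) (Fin m → GaloisField 2 l))
    (hL1 : L ≠ ⊤) :
    ∃ w ∈ dualCode (L : Set (Fin m → GaloisField 2 l)), w ≠ 0 := by
  obtain ⟨f, hf, hfL⟩ := Submodule.exists_dual_map_eq_bot_of_lt_top
    (lt_top_iff_ne_top.mpr hL1) inferInstance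
  set w : Fin m → GaloisField 2 l := fun i => f (fun j => if i = j then 1 else 0) with hwdef
  have hfv : ∀ v, f v = ∑ i, v i * w i := by
    intro v
    rw [LinearMap.pi_apply_eq_sum_univ]
    exact Finset.sum_congr rfl fun i _ => rfl
  refine ⟨w, ?_, ?_⟩
  · intro v hv
    rw [← hfv]
    have : f v ∈ Submodule.map f L := Submodule.mem_map_of_mem hv
    rw [hfL, Submodule.mem_bot] at this
    exact this
  · intro h0
    exact hf (LinearMap.ext fun v => by rw [hfv v, h0]; simp)

end Stmt8Aux

open Stmt8Aux in
/-- Let `q = 2^l`, let `(b_1,…,b_l)` be a basis of `F_q` over `F₂`, let `φ : F_q → F₂^l`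
take coordinates in this basis and `γ : F_q^m → F₂^{lm}` apply `φ` coordinatewise. If `L`
is an `F_q`-linear code with `{0} ≠ L ≠ F_q^m` and `C = γ(L)`, then
`d(L) ≤ d(C) ≤ l·d(L)` and `d(L⊥) ≤ d(C⊥) ≤ l·d(L⊥)`. -/
theorem stmt_8 (l m : ℕ) (hl : 1 ≤ l) (hm : 1 ≤ m)
    (b : Module.Basis (Fin l) (ZMod 2) (GaloisField 2 l))
    (L : Submodule (GaloisField 2 l) (Fin m → GaloisField 2 l))
    (hL0 : L ≠ ⊥) (hL1 : L ≠ ⊤)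
    (C : Set (Fin m × Fin l → ZMod 2))
    (hC : C = (fun v : Fin m → GaloisField 2 l =>
      fun p : Fin m × Fin l => b.repr (v p.1) p.2) '' (L : Set (Fin m → GaloisField 2 l))) :
    minDist (L : Set (Fin m → GaloisField 2 l)) ≤ minDist C ∧
    minDist C ≤ l * minDist (L : Set (Fin m → GaloisField 2 l)) ∧
    minDist (dualCode (L : Set (Fin m → GaloisField 2 l))) ≤ minDist (dualCode C) ∧
    minDist (dualCode C) ≤ l * minDist (dualCode (L : Set (Fin m → GaloisField 2 l))) := by
  have hC' : C = gam b '' (L : Set (Fin m → GaloisField 2 l)) := hC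
  subst hC'
  obtain ⟨v0, hv0L, hv0⟩ := Submodule.exists_mem_ne_zero_of_ne_bot hL0
  obtain ⟨h1, h2⟩ := minDist_bounds b (L : Set (Fin m → GaloisField 2 l)) ⟨v0, hv0L, hv0⟩
  have hdual := dual_image b L
  obtain ⟨w0, hw0D, hw0⟩ := exists_dual_ne L hL1
  obtain ⟨h3, h4⟩ := minDist_bounds (dbasis l b)
    (dualCode (L : Set (Fin m → GaloisField 2 l))) ⟨w0, hw0D, hw0⟩
  rw [hdual]
  exact ⟨h1, h2, h3, h4⟩
end

section
/- For all natural numbers n, m with 1 ≤ n < m, setting l = ⌈log₂ m⌉, there exists an F₂-linear subspace C of F₂^{lm} of dimension l·n such that m − n ≤ d(C) ≤ 2l(m − n) and n ≤ d(C⊥) ≤ 2l·n. -/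
open Polynomial Finset
lemma hammingWt_eq_card {ι : Type*} [Fintype ι] {F : Type*} [Zero F] (v : ι → F)
    [DecidablePred fun i => v i ≠ 0] :
    hammingWt v = (Finset.univ.filter fun i => v i ≠ 0).card := by
  simp [hammingWt, Set.ncard_eq_toFinset_card', Set.toFinset_setOf]

section RS
variable {F : Type*} [Field F] {m n : ℕ} (a : Fin m ↪ F)

noncomputable def evmap (a : Fin m ↪ F) : F[X] →ₗ[F] (Fin m → F) :=
  LinearMap.pi fun i => Polynomial.leval (a i)

lemma evmap_apply (f : F[X]) (i : Fin m) : evmap a f i = f.eval (a i) := rfl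

noncomputable def RS (a : Fin m ↪ F) (n : ℕ) : Submodule F (Fin m → F) :=
  (Polynomial.degreeLT F n).map (evmap a)

lemma natDegree_lt_of_mem_degreeLT (hn : 1 ≤ n) {f : F[X]} (hf : f ∈ Polynomial.degreeLT F n) :
    f.natDegree < n := by
  rcases eq_or_ne f 0 with rfl | hf0
  · rw [Polynomial.natDegree_zero]; omega
  · exact (Polynomial.natDegree_lt_iff_degree_lt hf0).2 (Polynomial.mem_degreeLT.1 hf)

/-- the zeros among evaluation points of a nonzero poly of degree < n are fewer than n -/
lemma card_zeros_lt (hn : 1 ≤ n) {f : F[X]} (hf : f ∈ Polynomial.degreeLT F n) (hf0 : f ≠ 0) :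
    by classical exact (Finset.univ.filter fun i => f.eval (a i) = 0).card < n := by
  classical
  have h1 : (Finset.univ.filter fun i => f.eval (a i) = 0).card ≤ f.roots.toFinset.card := by
    refine Finset.card_le_card_of_injOn a (fun i hi => ?_) (a.injective.injOn)
    replace hi := Finset.mem_filter.1 hi
    simp [Multiset.mem_toFinset, Polynomial.mem_roots, hf0, hi.2]
  calc (Finset.univ.filter fun i => f.eval (a i) = 0).card
      ≤ f.roots.toFinset.card := h1
    _ ≤ Multiset.card f.roots := f.roots.toFinset_card_le
    _ ≤ f.natDegree := f.card_roots'
    _ < n := natDegree_lt_of_mem_degreeLT hn hf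

lemma RS_inj (hnm : n ≤ m) : ∀ f ∈ Polynomial.degreeLT F n, evmap a f = 0 → f = 0 := by
  classical
  intro f hf hef
  by_contra hf0
  have hn : 1 ≤ n := by
    by_contra h
    push_neg at h
    interval_cases n
    have h0 : f.degree < 0 := by simpa using Polynomial.mem_degreeLT.1 hf
    exact hf0 (Polynomial.degree_eq_bot.1 (Nat.WithBot.lt_zero_iff.1 h0))
  have := card_zeros_lt a hn hf hf0
  have hall : (Finset.univ.filter fun i => f.eval (a i) = 0) = Finset.univ := by
    refine Finset.eq_univ_iff_forall.2 fun i => ?_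
    simp only [Finset.mem_filter, Finset.mem_univ, true_and]
    have := congrFun hef i
    simpa [evmap_apply] using this
  rw [hall, Finset.card_univ, Fintype.card_fin] at this
  omega

lemma RS_finrank (hnm : n ≤ m) : Module.finrank F (RS a n) = n := by
  classical
  set evD := (evmap a).comp (Polynomial.degreeLT F n).subtype with hevD
  have hinj : Function.Injective evD := by
    intro f g hfg
    have h0 : evmap a ((f : F[X]) - (g : F[X])) = 0 := by
      rw [map_sub, sub_eq_zero]; exact hfg
    have := RS_inj a hnm ((f : F[X]) - (g : F[X])) (Submodule.sub_mem _ f.2 g.2) h0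
    exact Subtype.ext (sub_eq_zero.1 this)
  have hr : LinearMap.range evD = RS a n := by
    rw [hevD, LinearMap.range_comp, Submodule.range_subtype]; rfl
  calc Module.finrank F (RS a n) = Module.finrank F (LinearMap.range evD) := by rw [hr]
    _ = Module.finrank F (Polynomial.degreeLT F n) :=
        (LinearEquiv.finrank_eq (LinearEquiv.ofInjective evD hinj)).symm
    _ = n := by
        rw [LinearEquiv.finrank_eq (Polynomial.degreeLTEquiv F n), Module.finrank_pi,
          Fintype.card_fin]

lemma RS_wt_lb (hn : 1 ≤ n) {v : Fin m → F} (hv : v ∈ RS a n) (hv0 : v ≠ 0) :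
    m - n ≤ hammingWt v := by
  classical
  obtain ⟨f, hf, rfl⟩ := hv
  have hf0 : f ≠ 0 := by rintro rfl; exact hv0 (map_zero _)
  have hz := card_zeros_lt a hn hf hf0
  have hsplit := Finset.card_filter_add_card_filter_not
    (s := (Finset.univ : Finset (Fin m))) (p := fun i => (evmap a f) i ≠ 0)
  rw [hammingWt_eq_card]
  have : (Finset.univ.filter fun i => ¬ (evmap a f) i ≠ 0)
      = (Finset.univ.filter fun i => f.eval (a i) = 0) := by
    ext i; simp [evmap_apply]
  rw [this] at hsplit
  rw [Finset.card_univ, Fintype.card_fin] at hsplit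
  omega

lemma RS_wt_ub (hn : 1 ≤ n) (hnm : n < m) :
    ∃ v ∈ RS a n, v ≠ 0 ∧ hammingWt v ≤ m - n + 1 := by
  classical
  set J : Finset (Fin m) := Finset.univ.filter (fun i => (i : ℕ) < n - 1) with hJ
  have hJcard : J.card = n - 1 := by
    have himg : J.image Fin.val = Finset.range (n - 1) := by
      ext x
      simp only [hJ, Finset.mem_image, Finset.mem_filter, Finset.mem_univ, true_and,
        Finset.mem_range]
      constructor
      · rintro ⟨i, hi, rfl⟩; exact hi
      · intro hx; exact ⟨⟨x, by omega⟩, hx, rfl⟩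
    calc J.card = (J.image Fin.val).card :=
          (Finset.card_image_of_injective _ Fin.val_injective).symm
      _ = n - 1 := by rw [himg, Finset.card_range]
  set g : F[X] := ∏ i ∈ J, (X - C (a i)) with hg
  have hgmon : g.Monic := monic_prod_of_monic _ _ fun i _ => monic_X_sub_C (a i)
  have hg0 : g ≠ 0 := hgmon.ne_zero
  have hdeg : g.natDegree ≤ n - 1 := by
    rw [hg]
    calc (∏ i ∈ J, (X - C (a i))).natDegree
        ≤ ∑ i ∈ J, (X - C (a i)).natDegree := Polynomial.natDegree_prod_le _ _
      _ = J.card := by simp [Polynomial.natDegree_X_sub_C]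
      _ ≤ n - 1 := le_of_eq hJcard
  have hgmem : g ∈ Polynomial.degreeLT F n :=
    Polynomial.mem_degreeLT.2 ((Polynomial.natDegree_lt_iff_degree_lt hg0).1 (by omega))
  have heval : ∀ i, (evmap a g) i = 0 ↔ i ∈ J := by
    intro i
    rw [evmap_apply, hg, Polynomial.eval_prod, Finset.prod_eq_zero_iff]
    constructor
    · rintro ⟨j, hj, hij⟩
      simp only [Polynomial.eval_sub, Polynomial.eval_X, Polynomial.eval_C, sub_eq_zero] at hij
      rwa [(a.injective (hij))]
    · intro hi
      exact ⟨i, hi, by simp⟩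
  refine ⟨evmap a g, Submodule.mem_map_of_mem hgmem, ?_, ?_⟩
  · intro h0
    have : (⟨n - 1, by omega⟩ : Fin m) ∈ J := (heval _).1 (by rw [h0]; rfl)
    simp only [hJ, Finset.mem_filter] at this
    omega
  · rw [hammingWt_eq_card]
    have : (Finset.univ.filter fun i => (evmap a g) i ≠ 0) = Jᶜ := by
      ext i; simp [heval i]
    rw [this, Finset.card_compl, Fintype.card_fin]
    omega

lemma RS_dual_lb (hn : 1 ≤ n) {u : Fin m → F} (hu : ∀ v ∈ RS a n, ∑ i, v i * u i = 0)
    (hu0 : u ≠ 0) : n ≤ hammingWt u := by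
  classical
  by_contra hlt
  push_neg at hlt
  rw [hammingWt_eq_card] at hlt
  set Z : Finset (Fin m) := Finset.univ.filter (fun i => u i ≠ 0) with hZ
  apply hu0
  funext i₀
  by_cases hi₀ : u i₀ = 0
  · exact hi₀
  have hi₀Z : i₀ ∈ Z := by simp [hZ, hi₀]
  set r : Fin m → F := fun i => if i = i₀ then 1 else 0 with hr
  set f : F[X] := Lagrange.interpolate Z a r with hf
  have hInj : Set.InjOn a Z := a.injective.injOn
  have hfdeg : f ∈ Polynomial.degreeLT F n := by
    rw [Polynomial.mem_degreeLT]
    calc f.degree < (Z.card : WithBot ℕ) := Lagrange.degree_interpolate_lt r hInj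
      _ < (n : WithBot ℕ) := by exact_mod_cast hlt
  have hmem : evmap a f ∈ RS a n := Submodule.mem_map_of_mem hfdeg
  have h0 := hu (evmap a f) hmem
  have hsum : ∑ i, (evmap a f) i * u i = u i₀ := by
    rw [← Finset.sum_subset (Finset.subset_univ Z) (fun i _ hi => by
      simp only [hZ, Finset.mem_filter, Finset.mem_univ, true_and, not_not] at hi
      rw [hi, mul_zero])]
    rw [Finset.sum_congr rfl (fun i hi => by
      rw [evmap_apply, hf, Lagrange.eval_interpolate_at_node r hInj hi])]
    rw [hr]
    simp only [ite_mul, one_mul, zero_mul]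
    rw [Finset.sum_ite_eq' Z i₀ u]
    simp [hi₀Z]
  rw [hsum] at h0
  exact absurd h0 hi₀

lemma RS_dual_ub (hn : 1 ≤ n) (hnm : n < m) :
    ∃ u : Fin m → F, u ≠ 0 ∧ (∀ v ∈ RS a n, ∑ i, v i * u i = 0) ∧ hammingWt u ≤ n + 1 := by
  classical
  have hm : n + 1 ≤ m := hnm
  set T : (Fin (n + 1) → F) →ₗ[F] (Fin n → F) :=
    LinearMap.pi (fun k => ∑ j, ((a (Fin.castLE hm j)) ^ (k : ℕ)) • LinearMap.proj j) with hT
  have hTapp : ∀ (c : Fin (n+1) → F) (k : Fin n),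
      T c k = ∑ j, (a (Fin.castLE hm j)) ^ (k : ℕ) * c j := by
    intro c k
    simp [hT, LinearMap.pi_apply, LinearMap.sum_apply, LinearMap.smul_apply, smul_eq_mul]
  have hnotinj : ¬ Function.Injective T := by
    intro hinj
    have := LinearMap.finrank_le_finrank_of_injective hinj
    rw [Module.finrank_pi, Module.finrank_pi, Fintype.card_fin, Fintype.card_fin] at this
    omega
  rw [← LinearMap.ker_eq_bot] at hnotinj
  obtain ⟨c, hcker, hc0⟩ := Submodule.exists_mem_ne_zero_of_ne_bot hnotinj
  have hTc : T c = 0 := hcker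
  set u : Fin m → F := fun i => if h : (i : ℕ) < n + 1 then c ⟨i, h⟩ else 0 with hu
  have huc : ∀ j : Fin (n + 1), u (Fin.castLE hm j) = c j :=
    fun j => dif_pos j.isLt
  have hval : ∀ i : Fin m, (i : ℕ) < n + 1 → i ∈ Finset.univ.image (Fin.castLE hm) :=
    fun i hlt => Finset.mem_image.2 ⟨⟨(i : ℕ), hlt⟩, Finset.mem_univ _, by ext; simp⟩
  refine ⟨u, ?_, ?_, ?_⟩
  · obtain ⟨j, hj⟩ := Function.ne_iff.1 hc0
    intro h0
    exact hj (by rw [← huc j, h0]; rfl)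
  · rintro v ⟨f, hf, rfl⟩
    have hnd : f.natDegree < n := natDegree_lt_of_mem_degreeLT hn hf
    have him : ∀ i : Fin m, i ∉ Finset.univ.image (Fin.castLE hm) → u i = 0 :=
      fun i hi => dif_neg fun hlt => hi (hval i hlt)
    rw [← Finset.sum_subset (Finset.subset_univ (Finset.univ.image (Fin.castLE hm)))
      (fun i _ hi => by rw [him i hi, mul_zero])]
    rw [Finset.sum_image (fun j _ j' _ h => Fin.castLE_injective hm h)]
    have : ∀ j : Fin (n + 1), (evmap a f) (Fin.castLE hm j) * u (Fin.castLE hm j)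
        = ∑ k ∈ Finset.range n, f.coeff k * ((a (Fin.castLE hm j)) ^ k * c j) := by
      intro j
      rw [huc, evmap_apply, Polynomial.eval_eq_sum_range' hnd, Finset.sum_mul]
      exact Finset.sum_congr rfl fun k _ => by ring
    rw [Finset.sum_congr rfl fun j _ => this j, Finset.sum_comm]
    refine Finset.sum_eq_zero fun k hk => ?_
    rw [← Finset.mul_sum]
    have hkn : k < n := Finset.mem_range.1 hk
    have : ∑ j, (a (Fin.castLE hm j)) ^ k * c j = T c ⟨k, hkn⟩ := (hTapp c ⟨k, hkn⟩).symm
    rw [this, hTc]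
    simp
  · rw [hammingWt_eq_card]
    calc (Finset.univ.filter fun i => u i ≠ 0).card
        ≤ (Finset.univ.image (Fin.castLE hm)).card := by
          refine Finset.card_le_card fun i hi => ?_
          simp only [Finset.mem_filter, Finset.mem_univ, true_and] at hi
          exact hval i (by by_contra hge; exact hi (dif_neg hge))
      _ ≤ n + 1 := le_trans Finset.card_image_le (by simp)

end RS

section
variable {K : Type*} [Field K] {F : Type*} [Field F] [Algebra K F] {l m : ℕ}

noncomputable def bexpand (c : Module.Basis (Fin l) K F) : (Fin (l * m) → K) ≃ₗ[K] (Fin m → F) where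
  toFun x := fun i => c.equivFun.symm (fun k => x (finProdFinEquiv (k, i)))
  invFun v := fun j => c.equivFun (v (finProdFinEquiv.symm j).2) (finProdFinEquiv.symm j).1
  map_add' x y := funext fun i => by
    rw [Pi.add_apply, ← map_add c.equivFun.symm]; rfl
  map_smul' r x := funext fun i => by
    rw [RingHom.id_apply, Pi.smul_apply, ← map_smul c.equivFun.symm]; rfl
  left_inv x := by
    funext j
    show c.equivFun (c.equivFun.symm _) _ = _
    rw [LinearEquiv.apply_symm_apply, Prod.mk.eta, Equiv.apply_symm_apply]
  right_inv v := by
    funext i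
    show c.equivFun.symm _ = _
    rw [show (fun k => c.equivFun (v ((finProdFinEquiv.symm (finProdFinEquiv (k, i))).2))
      ((finProdFinEquiv.symm (finProdFinEquiv (k, i))).1)) = c.equivFun (v i) from
      funext fun k => by simp, LinearEquiv.symm_apply_apply]

lemma bexpand_apply (c : Module.Basis (Fin l) K F) (x : Fin (l * m) → K) (i : Fin m) :
    bexpand c x i = ∑ k, x (finProdFinEquiv (k, i)) • c k := by
  simp [bexpand, Module.Basis.equivFun_symm_apply]

lemma bexpand_eq_zero_iff (c : Module.Basis (Fin l) K F) (x : Fin (l * m) → K) (i : Fin m) :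
    bexpand c x i = 0 ↔ ∀ k, x (finProdFinEquiv (k, i)) = 0 := by
  rw [show bexpand c x i = c.equivFun.symm (fun k => x (finProdFinEquiv (k, i))) from rfl,
    ← LinearEquiv.map_zero c.equivFun.symm]
  rw [(c.equivFun.symm.injective.eq_iff (b := 0))]
  constructor
  · intro h k; exact congrFun h k
  · intro h; funext k; exact h k

lemma image_support (c : Module.Basis (Fin l) K F) (x : Fin (l * m) → K) :
    by classical exact
    (Finset.univ.filter fun j => x j ≠ 0).image (fun j => (finProdFinEquiv.symm j).2)
      = Finset.univ.filter fun i => bexpand c x i ≠ 0 := by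
  classical
  ext i
  simp only [Finset.mem_image, Finset.mem_filter, Finset.mem_univ, true_and]
  constructor
  · rintro ⟨j, hj, rfl⟩
    rw [Ne, bexpand_eq_zero_iff]
    push_neg
    exact ⟨(finProdFinEquiv.symm j).1, by rwa [Prod.mk.eta, Equiv.apply_symm_apply]⟩
  · intro hi
    rw [Ne, bexpand_eq_zero_iff] at hi
    push_neg at hi
    obtain ⟨k, hk⟩ := hi
    exact ⟨finProdFinEquiv (k, i), hk, by simp⟩

lemma wt_le_wt_bexpand (c : Module.Basis (Fin l) K F) (x : Fin (l * m) → K) :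
    hammingWt (bexpand c x) ≤ hammingWt x := by
  classical
  rw [hammingWt_eq_card, hammingWt_eq_card, ← image_support c x]
  exact Finset.card_image_le

lemma wt_bexpand_le (c : Module.Basis (Fin l) K F) (x : Fin (l * m) → K) :
    hammingWt x ≤ l * hammingWt (bexpand c x) := by
  classical
  rw [hammingWt_eq_card, hammingWt_eq_card, ← image_support c x]
  refine Finset.card_le_mul_card_image _ l fun i _ => ?_
  calc ((Finset.univ.filter fun j => x j ≠ 0).filter
          fun j => (finProdFinEquiv.symm j).2 = i).card
      ≤ ((Finset.univ : Finset (Fin l)).image fun k => finProdFinEquiv (k, i)).card := by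
        refine Finset.card_le_card fun j hj => ?_
        simp only [Finset.mem_filter] at hj
        refine Finset.mem_image.2 ⟨(finProdFinEquiv.symm j).1, Finset.mem_univ _, ?_⟩
        rw [← hj.2, Prod.mk.eta, Equiv.apply_symm_apply]
    _ ≤ l := le_trans Finset.card_image_le (by simp)

variable [FiniteDimensional K F] [Algebra.IsSeparable K F]

noncomputable def dbasis (c : Module.Basis (Fin l) K F) : Module.Basis (Fin l) K F :=
  (Algebra.traceForm K F).dualBasis (traceForm_nondegenerate K F) c

lemma trace_basis_dbasis (c : Module.Basis (Fin l) K F) (k k' : Fin l) :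
    Algebra.trace K F (c k * dbasis c k') = if k = k' then 1 else 0 := by
  rw [← Algebra.traceForm_apply]
  exact (Algebra.traceForm K F).apply_dualBasis_right (traceForm_nondegenerate K F)
    (Algebra.traceForm_isSymm (R:=K) (S:=F)) c k k'

lemma dot_eq_trace (c : Module.Basis (Fin l) K F) (x y : Fin (l * m) → K) :
    ∑ j, x j * y j = Algebra.trace K F (∑ i, bexpand c x i * bexpand (dbasis c) y i) := by
  classical
  rw [map_sum, ← Equiv.sum_comp (finProdFinEquiv : Fin l × Fin m ≃ Fin (l * m))
    (fun j => x j * y j), Fintype.sum_prod_type, Finset.sum_comm]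
  refine Finset.sum_congr rfl fun i _ => ?_
  rw [bexpand_apply, bexpand_apply, Finset.sum_mul_sum, map_sum]
  simp only [smul_mul_smul_comm, map_sum, map_smul, trace_basis_dbasis, smul_eq_mul,
    mul_ite, mul_one, mul_zero, Finset.sum_ite_eq, Finset.mem_univ, if_true]


variable {m : ℕ}

noncomputable def expCode (c : Module.Basis (Fin l) K F) (D : Submodule F (Fin m → F)) :
    Submodule K (Fin (l * m) → K) :=
  (D.restrictScalars K).comap ((bexpand c).toLinearMap)

lemma mem_expCode (c : Module.Basis (Fin l) K F) (D : Submodule F (Fin m → F)) (x : Fin (l * m) → K) :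
    x ∈ expCode c D ↔ bexpand c x ∈ D := Iff.rfl

lemma mem_dualCode_expCode (c : Module.Basis (Fin l) K F) (D : Submodule F (Fin m → F))
    (y : Fin (l * m) → K) :
    y ∈ dualCode (expCode c D : Set (Fin (l * m) → K)) ↔
      ∀ v ∈ D, ∑ i, v i * bexpand (dbasis c) y i = 0 := by
  constructor
  · intro hy v hv
    have key : ∀ cc : F, Algebra.trace K F (cc * ∑ i, v i * bexpand (dbasis c) y i) = 0 := by
      intro cc
      have hx : (bexpand c).symm (cc • v) ∈ expCode c D := by
        rw [mem_expCode, LinearEquiv.apply_symm_apply]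
        exact Submodule.smul_mem D cc hv
      have h0 := hy _ hx
      rw [dot_eq_trace c] at h0
      rw [LinearEquiv.apply_symm_apply] at h0
      rw [← h0]
      congr 1
      rw [Finset.mul_sum]
      exact Finset.sum_congr rfl fun i _ => by
        simp [Pi.smul_apply, smul_eq_mul, mul_assoc]
    exact (traceForm_nondegenerate K F).1 _ fun cc => by
      rw [Algebra.traceForm_apply, mul_comm]; exact key cc
  · exact fun h x hx => by
      rw [dot_eq_trace c, h (bexpand c x) hx, map_zero]

lemma mem_dualCode_expCode' (c : Module.Basis (Fin l) K F) (D : Submodule F (Fin m → F))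
    (y : Fin (l * m) → K) :
    y ∈ dualCode (expCode c D : Set (Fin (l * m) → K)) ↔
      ∀ v ∈ D, ∑ i, v i * bexpand (dbasis c) y i = 0 := mem_dualCode_expCode c D y

end

/-- For all `1 ≤ n < m`, with `l = ⌈log₂ m⌉`, there exists an `F₂`-linear subspace `C` of
`F₂^{lm}` of dimension `l·n` such that `m − n ≤ d(C) ≤ 2l(m − n)` and `n ≤ d(C⊥) ≤ 2l·n`. -/
theorem stmt_9 (n m : ℕ) (hn : 1 ≤ n) (hnm : n < m) :
    ∃ C : Submodule (ZMod 2) (Fin (Nat.clog 2 m * m) → ZMod 2),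
      Module.finrank (ZMod 2) C = Nat.clog 2 m * n ∧
      m - n ≤ minDist (C : Set (Fin (Nat.clog 2 m * m) → ZMod 2)) ∧
      minDist (C : Set (Fin (Nat.clog 2 m * m) → ZMod 2)) ≤ 2 * Nat.clog 2 m * (m - n) ∧
      n ≤ minDist (dualCode (C : Set (Fin (Nat.clog 2 m * m) → ZMod 2))) ∧
      minDist (dualCode (C : Set (Fin (Nat.clog 2 m * m) → ZMod 2))) ≤ 2 * Nat.clog 2 m * n := by
  classical
  set l := Nat.clog 2 m with hldef
  have hm2 : 2 ≤ m := by omega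
  have hl1 : 1 ≤ l := Nat.clog_pos one_lt_two hm2
  haveI : Fact (Nat.Prime 2) := ⟨Nat.prime_two⟩
  set F := GaloisField 2 l with hFdef
  have hcard : Nat.card F = 2 ^ l := GaloisField.card 2 l (by omega)
  haveI : Finite F := Nat.finite_of_card_ne_zero (by rw [hcard]; positivity)
  haveI : Fintype F := Fintype.ofFinite F
  haveI : Algebra.IsAlgebraic (ZMod 2) F := Algebra.IsAlgebraic.of_finite (ZMod 2) F
  have hml : m ≤ Fintype.card F := by
    rw [← Nat.card_eq_fintype_card, hcard]
    exact Nat.le_pow_clog one_lt_two m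
  obtain ⟨a⟩ : Nonempty (Fin m ↪ F) :=
    Function.Embedding.nonempty_of_card_le (by rwa [Fintype.card_fin])
  have hfr : Module.finrank (ZMod 2) F = l := GaloisField.finrank 2 (by omega)
  set b : Module.Basis (Fin l) (ZMod 2) F := (Module.finBasis (ZMod 2) F).reindex (finCongr hfr)
    with hbdef
  set D := RS a n with hDdef
  set C := expCode b D with hCdef
  have hmemC : ∀ x, x ∈ C ↔ bexpand b x ∈ D := fun x => Iff.rfl
  -- finrank
  have hrk : Module.finrank (ZMod 2) C = l * n := by
    have e1 : (D.restrictScalars (ZMod 2)) ≃ₗ[ZMod 2] (Fin n → F) :=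
      ((Submodule.restrictScalarsEquiv (ZMod 2) F (Fin m → F) D).restrictScalars (ZMod 2)).trans
        ((LinearEquiv.ofFinrankEq (↥D) (Fin n → F) (by
          rw [Module.finrank_pi, Fintype.card_fin]
          exact RS_finrank a (le_of_lt hnm))).restrictScalars (ZMod 2))
    have E : C ≃ₗ[ZMod 2] (Fin n → F) :=
      ((bexpand b).ofSubmodule' (D.restrictScalars (ZMod 2))).trans e1
    rw [E.finrank_eq, Module.finrank_pi_fintype, hfr]
    simp [Finset.sum_const, mul_comm]
  refine ⟨C, hrk, ?_, ?_, ?_, ?_⟩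
  -- primal explicit codeword
  · -- m - n ≤ minDist
    obtain ⟨v, hvD, hv0, hvwt⟩ := RS_wt_ub a hn hnm
    have hmem : hammingWt ((bexpand b).symm v) ∈
        {k | ∃ x ∈ (C : Set (Fin (l * m) → ZMod 2)), x ≠ 0 ∧ hammingWt x = k} := by
      refine ⟨(bexpand b).symm v, ?_, ?_, rfl⟩
      · show (bexpand b).symm v ∈ C
        rw [hmemC, LinearEquiv.apply_symm_apply]
        exact hvD
      · intro h
        exact hv0 (by rw [← LinearEquiv.apply_symm_apply (bexpand b) v, h, map_zero])
    obtain ⟨x₀, hx₀C, hx₀0, hwt₀⟩ := Nat.sInf_mem (Set.nonempty_of_mem hmem)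
    rw [minDist, ← hwt₀]
    have hbx0 : bexpand b x₀ ≠ 0 := fun h =>
      hx₀0 (by rw [← LinearEquiv.symm_apply_apply (bexpand b) x₀, h, map_zero])
    calc m - n ≤ hammingWt (bexpand b x₀) := RS_wt_lb a hn ((hmemC x₀).1 hx₀C) hbx0
      _ ≤ hammingWt x₀ := wt_le_wt_bexpand b x₀
  · -- minDist ≤ 2 l (m - n)
    obtain ⟨v, hvD, hv0, hvwt⟩ := RS_wt_ub a hn hnm
    have hxC : (bexpand b).symm v ∈ (C : Set (Fin (l * m) → ZMod 2)) := by
      show (bexpand b).symm v ∈ C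
      rw [hmemC, LinearEquiv.apply_symm_apply]
      exact hvD
    have hx0 : (bexpand b).symm v ≠ 0 := fun h =>
      hv0 (by rw [← LinearEquiv.apply_symm_apply (bexpand b) v, h, map_zero])
    have hub : minDist (C : Set (Fin (l * m) → ZMod 2)) ≤ hammingWt ((bexpand b).symm v) :=
      Nat.sInf_le ⟨(bexpand b).symm v, hxC, hx0, rfl⟩
    have hwtle : hammingWt ((bexpand b).symm v) ≤ l * (m - n + 1) := by
      have h1 := wt_bexpand_le b ((bexpand b).symm v)
      rw [LinearEquiv.apply_symm_apply] at h1
      exact le_trans h1 (Nat.mul_le_mul_left l hvwt)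
    have : l * (m - n + 1) ≤ 2 * l * (m - n) := by
      have h2 : m - n + 1 ≤ 2 * (m - n) := by omega
      calc l * (m - n + 1) ≤ l * (2 * (m - n)) := Nat.mul_le_mul_left l h2
        _ = 2 * l * (m - n) := by ring
    omega
  · -- n ≤ minDist dual
    obtain ⟨u, hu0, hudual, huwt⟩ := RS_dual_ub a hn hnm
    have hymem : (bexpand (dbasis b)).symm u ∈ dualCode (C : Set (Fin (l * m) → ZMod 2)) := by
      rw [hCdef, mem_dualCode_expCode]
      intro v hv
      rw [LinearEquiv.apply_symm_apply]
      exact hudual v hv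
    have hy0 : (bexpand (dbasis b)).symm u ≠ 0 := fun h =>
      hu0 (by rw [← LinearEquiv.apply_symm_apply (bexpand (dbasis b)) u, h, map_zero])
    have hmem : hammingWt ((bexpand (dbasis b)).symm u) ∈
        {k | ∃ y ∈ dualCode (C : Set (Fin (l * m) → ZMod 2)), y ≠ 0 ∧ hammingWt y = k} :=
      ⟨_, hymem, hy0, rfl⟩
    obtain ⟨y₀, hy₀d, hy₀0, hwt₀⟩ := Nat.sInf_mem (Set.nonempty_of_mem hmem)
    rw [minDist, ← hwt₀]
    have h1 : ∀ v ∈ D, ∑ i, v i * bexpand (dbasis b) y₀ i = 0 := by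
      rw [hCdef] at hy₀d
      exact (mem_dualCode_expCode b D y₀).1 hy₀d
    have hby0 : bexpand (dbasis b) y₀ ≠ 0 := fun h =>
      hy₀0 (by rw [← LinearEquiv.symm_apply_apply (bexpand (dbasis b)) y₀, h, map_zero])
    calc n ≤ hammingWt (bexpand (dbasis b) y₀) := RS_dual_lb a hn h1 hby0
      _ ≤ hammingWt y₀ := wt_le_wt_bexpand (dbasis b) y₀
  · -- minDist dual ≤ 2 l n
    obtain ⟨u, hu0, hudual, huwt⟩ := RS_dual_ub a hn hnm
    have hymem : (bexpand (dbasis b)).symm u ∈ dualCode (C : Set (Fin (l * m) → ZMod 2)) := by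
      rw [hCdef, mem_dualCode_expCode]
      intro v hv
      rw [LinearEquiv.apply_symm_apply]
      exact hudual v hv
    have hy0 : (bexpand (dbasis b)).symm u ≠ 0 := fun h =>
      hu0 (by rw [← LinearEquiv.apply_symm_apply (bexpand (dbasis b)) u, h, map_zero])
    have hub : minDist (dualCode (C : Set (Fin (l * m) → ZMod 2)))
        ≤ hammingWt ((bexpand (dbasis b)).symm u) :=
      Nat.sInf_le ⟨(bexpand (dbasis b)).symm u, hymem, hy0, rfl⟩
    have hwtle : hammingWt ((bexpand (dbasis b)).symm u) ≤ l * (n + 1) := by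
      have h1 := wt_bexpand_le (dbasis b) ((bexpand (dbasis b)).symm u)
      rw [LinearEquiv.apply_symm_apply] at h1
      exact le_trans h1 (Nat.mul_le_mul_left l huwt)
    have : l * (n + 1) ≤ 2 * l * n := by
      have h2 : n + 1 ≤ 2 * n := by omega
      calc l * (n + 1) ≤ l * (2 * n) := Nat.mul_le_mul_left l h2
        _ = 2 * l * n := by ring
    omega
end

section
/- For all natural numbers d ≤ n and s ≥ 1, (n + 1) · ∑_{i=0}^{s} C(d, i) ≤ (d + 1) · ∑_{i=0}^{s} C(n, i). -/
/-!
Write `S n = ∑_{i ≤ s} C(n, i)`. The claim is that `S n / (n + 1)` is monotone in `n`. By Pascal's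
rule `S (n + 1) = S n + ∑_{i < s} C(n, i)`, so one step of monotonicity amounts to
`S n ≤ (n + 1) ∑_{i < s} C(n, i)`, i.e. `C(n, s) ≤ n ∑_{i < s} C(n, i)`; this holds because
`C(n, s) ≤ n C(n, s - 1)` when `s ≥ 1`.
-/

open Finset

theorem Nat.choose_succ_le_mul_choose (n k : ℕ) : n.choose (k + 1) ≤ n * n.choose k :=
  calc n.choose (k + 1) ≤ n.choose (k + 1) * (k + 1) := Nat.le_mul_of_pos_right _ k.succ_pos
    _ = n.choose k * (n - k) := Nat.choose_succ_right_eq n k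
    _ ≤ n * n.choose k := by rw [mul_comm]; exact Nat.mul_le_mul_right _ (Nat.sub_le n k)

theorem Nat.sum_range_succ_choose_succ (n s : ℕ) :
    ∑ i ∈ range (s + 1), (n + 1).choose i =
      ∑ i ∈ range (s + 1), n.choose i + ∑ i ∈ range s, n.choose i := by
  rw [sum_range_succ', sum_range_succ' (fun i => n.choose i)]
  simp only [Nat.choose_succ_succ', sum_add_distrib, Nat.choose_zero_right]
  ring

theorem Nat.sum_range_succ_choose_le_mul (n s : ℕ) :
    ∑ i ∈ range (s + 2), n.choose i ≤ (n + 1) * ∑ i ∈ range (s + 1), n.choose i := by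
  have hlast : n.choose (s + 1) ≤ n * ∑ i ∈ range (s + 1), n.choose i :=
    (Nat.choose_succ_le_mul_choose n s).trans <| Nat.mul_le_mul_left n <|
      single_le_sum (fun i _ => Nat.zero_le (n.choose i)) (self_mem_range_succ s)
  rw [sum_range_succ _ (s + 1)]
  linarith

theorem Nat.monotone_sum_range_choose_div (s : ℕ) (hs : 1 ≤ s) :
    Monotone fun n : ℕ => (∑ i ∈ range (s + 1), n.choose i : ℚ) / (n + 1) := by
  obtain ⟨t, rfl⟩ := Nat.exists_eq_add_of_le' hs
  refine monotone_nat_of_le_succ fun n => ?_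
  have hstep : (n + 2) * ∑ i ∈ range (t + 2), n.choose i ≤
      (n + 1) * ∑ i ∈ range (t + 2), (n + 1).choose i := by
    rw [Nat.sum_range_succ_choose_succ]
    linarith [Nat.sum_range_succ_choose_le_mul n t]
  rw [div_le_div_iff₀ (by positivity) (by positivity)]
  exact_mod_cast (by linarith : (∑ i ∈ range (t + 2), n.choose i) * (n + 1 + 1) ≤
    (∑ i ∈ range (t + 2), (n + 1).choose i) * (n + 1))

/-- For all natural numbers `d ≤ n` and `s ≥ 1`,
`(n + 1) · ∑_{i=0}^{s} C(d, i) ≤ (d + 1) · ∑_{i=0}^{s} C(n, i)`. -/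
theorem stmt_10 (n d s : ℕ) (hdn : d ≤ n) (hs : 1 ≤ s) :
    (n + 1) * ∑ i ∈ Finset.range (s + 1), d.choose i ≤
      (d + 1) * ∑ i ∈ Finset.range (s + 1), n.choose i := by
  have h := Nat.monotone_sum_range_choose_div s hs hdn
  rw [div_le_div_iff₀ (by positivity) (by positivity)] at h
  rw [mul_comm (n + 1), mul_comm (d + 1)]
  exact_mod_cast h
end

section
/- For all natural numbers a and c with c < a, C(2a, a + c) ≥ C(2a, a) · exp(−c²/(a − c)), as an inequality of real numbers. -/
/-!
Induction on `c`. Consecutive binomial coefficients satisfy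
`C(2a, a+c+1) = C(2a, a+c) · (a-c)/(a+c+1)`, and `1 + t ≤ exp t` bounds this ratio below by
`exp(-(2c+1)/(a-c))`. Since `c² + (2c+1) = (c+1)²`, the exponents add up to `-(c+1)²/(a-c)`,
which only decreases when the denominator shrinks to `a-c-1`.
-/

open Real

-- Real subtraction makes this hold for every `k`: both sides vanish when `n < k`.
theorem Nat.cast_choose_succ_right (n k : ℕ) :
    (n.choose (k + 1) : ℝ) = n.choose k * ((n - k) / (k + 1)) := by
  rcases le_or_gt k n with hk | hk
  · have h := congrArg (Nat.cast : ℕ → ℝ) (Nat.choose_succ_right_eq n k)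
    push_cast [Nat.cast_sub hk] at h
    rw [mul_div, eq_div_iff (by positivity), h]
  · simp [Nat.choose_eq_zero_of_lt hk, Nat.choose_eq_zero_of_lt (Nat.lt_succ_of_lt hk)]

theorem exp_neg_div_le_div_add {x t : ℝ} (hx : 0 < x) (hxt : 0 < x + t) :
    exp (-(t / x)) ≤ x / (x + t) := by
  have h : (x + t) / x ≤ exp (t / x) := by
    calc (x + t) / x = t / x + 1 := by field_simp; ring
      _ ≤ exp (t / x) := add_one_le_exp _
  rw [exp_neg, ← inv_div (x + t) x]
  exact inv_anti₀ (by positivity) h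

theorem neg_sq_div_sub_succ_le {a c : ℝ} (h : c + 1 < a) :
    -(c + 1) ^ 2 / (a - (c + 1)) ≤ -c ^ 2 / (a - c) + -((2 * c + 1) / (a - c)) := by
  have h₁ : 0 < a - (c + 1) := by linarith
  have h₂ : 0 < a - c := by linarith
  calc -(c + 1) ^ 2 / (a - (c + 1)) ≤ -(c + 1) ^ 2 / (a - c) := by
        rw [neg_div, neg_div, neg_le_neg_iff]
        exact div_le_div_of_nonneg_left (by positivity) h₁ (by linarith)
    _ = -c ^ 2 / (a - c) + -((2 * c + 1) / (a - c)) := by field_simp; ring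

theorem choose_two_mul_add_succ (a c : ℕ) :
    ((2 * a).choose (a + (c + 1)) : ℝ) =
      (2 * a).choose (a + c) * ((a - c) / ((a - c) + (2 * c + 1))) := by
  rw [← add_assoc, Nat.cast_choose_succ_right]
  push_cast
  ring_nf

/-- For all natural numbers `a` and `c` with `c < a`,
`C(2a, a + c) ≥ C(2a, a) · exp(−c²/(a − c))` as real numbers. -/
theorem stmt_11 (a c : ℕ) (h : c < a) :
    (((2 * a).choose (a + c) : ℝ)) ≥
      ((2 * a).choose a : ℝ) * Real.exp (-(c : ℝ) ^ 2 / ((a : ℝ) - (c : ℝ))) := by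
  induction c with
  | zero => simp
  | succ c ih =>
    have hc : (c : ℝ) + 1 < a := by exact_mod_cast h
    have hpos : (0 : ℝ) < a - c := by linarith
    push_cast
    calc ((2 * a).choose a : ℝ) * exp (-((c : ℝ) + 1) ^ 2 / (a - (c + 1)))
        ≤ (2 * a).choose a * (exp (-(c : ℝ) ^ 2 / (a - c)) * exp (-((2 * c + 1) / (a - c)))) := by
          rw [← exp_add]
          gcongr
          exact neg_sq_div_sub_succ_le hc
      _ ≤ (2 * a).choose (a + c) * ((a - c) / ((a - c) + (2 * c + 1))) := by
          rw [← mul_assoc]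
          gcongr
          · exact ih (by omega)
          · exact exp_neg_div_le_div_add hpos (by positivity)
      _ = (2 * a).choose (a + (c + 1)) := (choose_two_mul_add_succ a c).symm
end

section
/- Let l ≥ 1 be a natural number. Let b = (b_1, …, b_{2l}) ∈ {0,1}^{2l} be random, where for each i ∈ {1,…,l} independently the pair (b_i, b_{l+i}) is chosen uniformly from {(0,0), (1,0), (0,1)}. Let 𝒴 be a family of subsets of {1,…,l} and 𝒵 a family of subsets of {l+1,…,2l}, and let R = {S ∪ T : S ∈ 𝒴, T ∈ 𝒵}. Suppose that for every S ∈ 𝒴 and T ∈ 𝒵, the number of indices i ∈ {1,…,l} with i ∈ S and l + i ∈ T is not equal to 1. Then Pr_b[supp(b) ∈ R] < 2^{−l/2}. -/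
open Finset

variable {ι : Type*} [DecidableEq ι]

/-- number of "disjoint pairs" in the rectangle `Y × Z`. -/
def ddp (Y Z : Finset (Finset ι)) : ℕ :=
  ∑ S ∈ Y, ∑ T ∈ Z, if S ∩ T = ∅ then 1 else 0

lemma ddp_right_add (A B0 B1 : Finset (Finset ι)) :
    ddp A (B0 ∪ B1) + ddp A (B0 ∩ B1) = ddp A B0 + ddp A B1 := by
  unfold ddp
  rw [← Finset.sum_add_distrib, ← Finset.sum_add_distrib]
  exact Finset.sum_congr rfl fun S _ => Finset.sum_union_inter

lemma ddp_left_add (A0 A1 B : Finset (Finset ι)) :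
    ddp (A0 ∪ A1) B + ddp (A0 ∩ A1) B = ddp A0 B + ddp A1 B := by
  unfold ddp; exact Finset.sum_union_inter

lemma ddp_sub_ineq (A0 A1 B0 B1 : Finset (Finset ι))
    (h : ∀ S ∈ A0 ∩ A1, ∀ T ∈ B0 ∩ B1, S ∩ T ≠ ∅) :
    ddp A0 (B0 ∩ B1) + ddp (A0 ∩ A1) B0 ≤ ddp A0 B0 := by
  unfold ddp
  have hsplit : ∀ (f : Finset ι → ℕ),
      ∑ S ∈ A0 \ A1, f S + ∑ S ∈ A0 ∩ A1, f S = ∑ S ∈ A0, f S := by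
    intro f
    rw [← Finset.sum_union (Finset.disjoint_sdiff_inter A0 A1), Finset.sdiff_union_inter]
  rw [← hsplit (fun S => ∑ T ∈ B0 ∩ B1, if S ∩ T = ∅ then 1 else 0),
      ← hsplit (fun S => ∑ T ∈ B0, if S ∩ T = ∅ then 1 else 0)]
  have hz : ∑ S ∈ A0 ∩ A1, ∑ T ∈ B0 ∩ B1, (if S ∩ T = ∅ then 1 else 0) = 0 := by
    refine Finset.sum_eq_zero fun S hS => Finset.sum_eq_zero fun T hT => ?_
    simp [h S hS T hT]
  have hm : ∀ S, ∑ T ∈ B0 ∩ B1, (if S ∩ T = ∅ then 1 else 0) ≤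
      ∑ T ∈ B0, (if S ∩ T = ∅ then 1 else 0) := fun S =>
    Finset.sum_le_sum_of_subset (Finset.inter_subset_left)
  have := Finset.sum_le_sum (fun S (_ : S ∈ A0 \ A1) => hm S)
  omega

lemma key_lemma (u : Finset ι) : ∀ (Y Z : Finset (Finset ι)),
    (∀ S ∈ Y, S ⊆ u) → (∀ T ∈ Z, T ⊆ u) →
    (∀ S ∈ Y, ∀ T ∈ Z, (S ∩ T).card ≠ 1) → ddp Y Z ≤ 2 ^ u.card := by
  induction u using Finset.induction_on with
  | empty =>
    intro Y Z hY hZ _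
    have hYc : Y.card ≤ 1 := Finset.card_le_one.2 fun S hS S' hS' => by
      rw [Finset.subset_empty.1 (hY S hS), Finset.subset_empty.1 (hY S' hS')]
    have hZc : Z.card ≤ 1 := Finset.card_le_one.2 fun T hT T' hT' => by
      rw [Finset.subset_empty.1 (hZ T hT), Finset.subset_empty.1 (hZ T' hT')]
    calc ddp Y Z ≤ ∑ S ∈ Y, ∑ T ∈ Z, 1 :=
          Finset.sum_le_sum fun S _ => Finset.sum_le_sum fun T _ => by split <;> omega
      _ = Y.card * Z.card := by simp [mul_comm]
      _ ≤ 2 ^ (∅ : Finset ι).card := by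
          simpa using Nat.mul_le_mul hYc hZc
  | @insert a u ha ih =>
    intro Y Z hY hZ h1
    set A0 := Y.filter (fun S => a ∉ S) with hA0def
    set A1 := (Y.filter (fun S => a ∈ S)).image (fun S => S.erase a) with hA1def
    set B0 := Z.filter (fun T => a ∉ T) with hB0def
    set B1 := (Z.filter (fun T => a ∈ T)).image (fun S => S.erase a) with hB1def
    -- membership facts
    have hA0mem : ∀ S ∈ A0, S ∈ Y ∧ a ∉ S := fun S hS => Finset.mem_filter.1 hS
    have hB0mem : ∀ T ∈ B0, T ∈ Z ∧ a ∉ T := fun T hT => Finset.mem_filter.1 hT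
    have hA1mem : ∀ S' ∈ A1, a ∉ S' ∧ insert a S' ∈ Y := by
      intro S' hS'
      obtain ⟨S, hS, rfl⟩ := Finset.mem_image.1 hS'
      have := Finset.mem_filter.1 hS
      exact ⟨Finset.notMem_erase a S, by rw [Finset.insert_erase this.2]; exact this.1⟩
    have hB1mem : ∀ T' ∈ B1, a ∉ T' ∧ insert a T' ∈ Z := by
      intro T' hT'
      obtain ⟨T, hT, rfl⟩ := Finset.mem_image.1 hT'
      have := Finset.mem_filter.1 hT
      exact ⟨Finset.notMem_erase a T, by rw [Finset.insert_erase this.2]; exact this.1⟩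
    -- subset facts
    have hA0sub : ∀ S ∈ A0, S ⊆ u := by
      intro S hS
      obtain ⟨hSY, haS⟩ := hA0mem S hS
      have := Finset.subset_insert_iff.1 (hY S hSY)
      rwa [Finset.erase_eq_of_notMem haS] at this
    have hB0sub : ∀ T ∈ B0, T ⊆ u := by
      intro T hT
      obtain ⟨hTZ, haT⟩ := hB0mem T hT
      have := Finset.subset_insert_iff.1 (hZ T hTZ)
      rwa [Finset.erase_eq_of_notMem haT] at this
    have hA1sub : ∀ S' ∈ A1, S' ⊆ u := by
      intro S' hS'
      obtain ⟨haS, hiY⟩ := hA1mem S' hS'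
      have := Finset.subset_insert_iff.1 (hY _ hiY)
      rwa [Finset.erase_insert haS] at this
    have hB1sub : ∀ T' ∈ B1, T' ⊆ u := by
      intro T' hT'
      obtain ⟨haT, hiZ⟩ := hB1mem T' hT'
      have := Finset.subset_insert_iff.1 (hZ _ hiZ)
      rwa [Finset.erase_insert haT] at this
    -- card ≠ 1 conditions
    have hc01 : ∀ S ∈ A0, ∀ T' ∈ B1, (S ∩ T').card ≠ 1 := by
      intro S hS T' hT'
      obtain ⟨hSY, haS⟩ := hA0mem S hS
      obtain ⟨haT, hiZ⟩ := hB1mem T' hT'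
      have := h1 S hSY _ hiZ
      rwa [Finset.inter_insert_of_notMem haS] at this
    have hc10 : ∀ S' ∈ A1, ∀ T ∈ B0, (S' ∩ T).card ≠ 1 := by
      intro S' hS' T hT
      obtain ⟨haS, hiY⟩ := hA1mem S' hS'
      obtain ⟨hTZ, haT⟩ := hB0mem T hT
      have := h1 _ hiY T hTZ
      rwa [Finset.insert_inter_of_notMem haT] at this
    have hc00 : ∀ S ∈ A0, ∀ T ∈ B0, (S ∩ T).card ≠ 1 := fun S hS T hT =>
      h1 S (hA0mem S hS).1 T (hB0mem T hT).1
    -- zero condition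
    have hzero : ∀ S ∈ A0 ∩ A1, ∀ T ∈ B0 ∩ B1, S ∩ T ≠ ∅ := by
      intro S hS T hT hST
      have hSm := Finset.mem_inter.1 hS
      have hTm := Finset.mem_inter.1 hT
      obtain ⟨haS, hiY⟩ := hA1mem S hSm.2
      obtain ⟨haT, hiZ⟩ := hB1mem T hTm.2
      have := h1 _ hiY _ hiZ
      apply this
      rw [Finset.insert_inter_of_mem (Finset.mem_insert_self a T),
        Finset.inter_insert_of_notMem haS, hST]
      simp
    -- IH applications
    have ih1 : ddp A0 (B0 ∪ B1) ≤ 2 ^ u.card := by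
      apply ih _ _ hA0sub
      · intro T hT
        rcases Finset.mem_union.1 hT with h | h
        exacts [hB0sub T h, hB1sub T h]
      · intro S hS T hT
        rcases Finset.mem_union.1 hT with h | h
        exacts [hc00 S hS T h, hc01 S hS T h]
    have ih2 : ddp (A0 ∪ A1) B0 ≤ 2 ^ u.card := by
      apply ih
      · intro S hS
        rcases Finset.mem_union.1 hS with h | h
        exacts [hA0sub S h, hA1sub S h]
      · exact hB0sub
      · intro S hS T hT
        rcases Finset.mem_union.1 hS with h | h
        exacts [hc00 S h T hT, hc10 S h T hT]
    -- decomposition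
    have hsplitW : ∀ (W : Finset (Finset ι)) (f : Finset ι → ℕ),
        ∑ S ∈ W, f S =
          ∑ S ∈ W.filter (fun S => a ∉ S), f S + ∑ S ∈ W.filter (fun S => a ∈ S), f S := by
      intro W f
      rw [← Finset.sum_filter_add_sum_filter_not W (fun S => a ∉ S) f]
      congr 1
      apply Finset.sum_congr _ (fun _ _ => rfl)
      simp only [not_not]
    have himg : ∀ (W : Finset (Finset ι)) (f : Finset ι → ℕ),
        ∑ T ∈ (W.filter (fun T => a ∈ T)).image (fun T => T.erase a), f T
          = ∑ T ∈ W.filter (fun T => a ∈ T), f (T.erase a) := by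
      intro W f
      apply Finset.sum_image
      intro x hx y hy hxy
      have hax := (Finset.mem_filter.1 hx).2
      have hay := (Finset.mem_filter.1 hy).2
      rw [← Finset.insert_erase hax, ← Finset.insert_erase hay, show x.erase a = y.erase a from hxy]
    have hinterS : ∀ S T : Finset ι, a ∉ S → S ∩ T.erase a = S ∩ T := by
      intro S T haS
      rw [Finset.inter_erase, Finset.erase_eq_of_notMem
        (fun hc => haS (Finset.mem_inter.1 hc).1)]
    have hinterT : ∀ S T : Finset ι, a ∉ T → S.erase a ∩ T = S ∩ T := by
      intro S T haT
      rw [Finset.erase_inter, Finset.erase_eq_of_notMem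
        (fun hc => haT (Finset.mem_inter.1 hc).2)]
    have gsplit : ∀ S : Finset ι, a ∉ S →
        ∑ T ∈ Z, (if S ∩ T = ∅ then (1:ℕ) else 0) =
        ∑ T ∈ B0, (if S ∩ T = ∅ then 1 else 0)
          + ∑ T ∈ B1, (if S ∩ T = ∅ then (1:ℕ) else 0) := by
      intro S haS
      rw [hB1def, himg Z (fun T => if S ∩ T = ∅ then 1 else 0),
        hsplitW Z (fun T => if S ∩ T = ∅ then (1:ℕ) else 0), ← hB0def]
      congr 1
      refine Finset.sum_congr rfl fun T hT => ?_
      rw [hinterS S T haS]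
    have gsplit2 : ∀ S : Finset ι, a ∈ S →
        ∑ T ∈ Z, (if S ∩ T = ∅ then (1:ℕ) else 0) =
        ∑ T ∈ B0, (if S.erase a ∩ T = ∅ then 1 else 0) := by
      intro S haS
      rw [hsplitW Z (fun T => if S ∩ T = ∅ then (1:ℕ) else 0), ← hB0def]
      have h2 : ∑ T ∈ Z.filter (fun T => a ∈ T), (if S ∩ T = ∅ then (1:ℕ) else 0) = 0 :=
        Finset.sum_eq_zero fun T hT => by
          have hmem : a ∈ S ∩ T := Finset.mem_inter.2 ⟨haS, (Finset.mem_filter.1 hT).2⟩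
          simp [Finset.ne_empty_of_mem hmem]
      rw [h2, add_zero]
      refine Finset.sum_congr rfl fun T hT => ?_
      rw [hinterT S T (hB0mem T hT).2]
    have hdec : ddp Y Z = ddp A0 B0 + ddp A0 B1 + ddp A1 B0 := by
      unfold ddp
      rw [hsplitW Y (fun S => ∑ T ∈ Z, if S ∩ T = ∅ then (1:ℕ) else 0), ← hA0def]
      have e1 : ∑ S ∈ A0, ∑ T ∈ Z, (if S ∩ T = ∅ then (1:ℕ) else 0)
          = ∑ S ∈ A0, ∑ T ∈ B0, (if S ∩ T = ∅ then (1:ℕ) else 0)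
            + ∑ S ∈ A0, ∑ T ∈ B1, (if S ∩ T = ∅ then (1:ℕ) else 0) := by
        rw [← Finset.sum_add_distrib]
        exact Finset.sum_congr rfl fun S hS => gsplit S (hA0mem S hS).2
      have e2 : ∑ S ∈ Y.filter (fun S => a ∈ S), ∑ T ∈ Z, (if S ∩ T = ∅ then (1:ℕ) else 0)
          = ∑ S ∈ A1, ∑ T ∈ B0, (if S ∩ T = ∅ then (1:ℕ) else 0) := by
        rw [hA1def, himg Y (fun S => ∑ T ∈ B0, if S ∩ T = ∅ then (1:ℕ) else 0)]
        exact Finset.sum_congr rfl fun S hS => gsplit2 S (Finset.mem_filter.1 hS).2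
      rw [e1, e2]
    have hid1 := ddp_right_add A0 B0 B1
    have hid2 := ddp_left_add A0 A1 B0
    have hsub := ddp_sub_ineq A0 A1 B0 B1 hzero
    have hcard : (insert a u).card = u.card + 1 := Finset.card_insert_of_notMem ha
    rw [hdec, hcard, pow_succ]
    omega

/-- Razborov-style corruption bound for different-from-1 disjointness rectangles.
A random `b ∈ {0,1}^{2l}` is modelled as `u : Fin l → Bool × Bool`, where `u i` is the pair
`(b_i, b_{l+i})`, chosen uniformly from `{(0,0), (1,0), (0,1)}` independently for each `i`.
Subsets of the second half `{l+1,…,2l}` are identified with subsets of `Fin l` via the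
shift `i ↦ l + i`; under this identification, the hypothesis that for every `S ∈ 𝒴`,
`T ∈ 𝒵` the number of `i` with `i ∈ S` and `l + i ∈ T` is not `1` reads `(S ∩ T).card ≠ 1`.
Then `Pr_b[supp(b) ∈ R] < 2^{−l/2}`, where `R = {S ∪ T : S ∈ 𝒴, T ∈ 𝒵}`, i.e. the
probability that the support of the first half belongs to `𝒴` and the support of the second
half belongs to `𝒵`. -/
theorem stmt_12 (l : ℕ) (hl : 1 ≤ l) (Y Z : Finset (Finset (Fin l)))
    (hR : ∀ S ∈ Y, ∀ T ∈ Z, (S ∩ T).card ≠ 1) :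
    ((Finset.univ.filter fun u : Fin l → Bool × Bool =>
        (∀ i, u i ∈ ({(false, false), (true, false), (false, true)} : Finset (Bool × Bool))) ∧
        (Finset.univ.filter fun i => (u i).1 = true) ∈ Y ∧
        (Finset.univ.filter fun i => (u i).2 = true) ∈ Z).card : ℝ) / 3 ^ l <
      (2 : ℝ) ^ (-(l : ℝ) / 2) := by
  classical
  set F := (Finset.univ.filter fun u : Fin l → Bool × Bool =>
        (∀ i, u i ∈ ({(false, false), (true, false), (false, true)} : Finset (Bool × Bool))) ∧
        (Finset.univ.filter fun i => (u i).1 = true) ∈ Y ∧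
        (Finset.univ.filter fun i => (u i).2 = true) ∈ Z) with hF
  -- Step 1: F.card ≤ ddp Y Z
  have h1 : F.card ≤ ddp Y Z := by
    have hcard : ddp Y Z = ((Y ×ˢ Z).filter fun p => p.1 ∩ p.2 = ∅).card := by
      rw [Finset.card_filter, Finset.sum_product]; rfl
    rw [hcard]
    apply Finset.card_le_card_of_injOn
      (fun u => (Finset.univ.filter fun i => (u i).1 = true,
                 Finset.univ.filter fun i => (u i).2 = true))
    · intro u hu
      rw [hF, Finset.mem_coe, Finset.mem_filter] at hu
      obtain ⟨-, hall, hY', hZ'⟩ := hu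
      rw [Finset.mem_coe, Finset.mem_filter, Finset.mem_product]
      refine ⟨⟨hY', hZ'⟩, ?_⟩
      ext i
      simp only [Finset.mem_inter, Finset.mem_filter, Finset.mem_univ, true_and,
        Finset.notMem_empty, iff_false, not_and]
      intro hu1 hu2
      have huv : u i = (true, true) := Prod.ext hu1 hu2
      have := hall i
      rw [huv] at this
      simp at this
    · intro u hu v hv h
      simp only [Prod.mk.injEq] at h
      funext i
      have e1 : ((u i).1 = true) ↔ ((v i).1 = true) := by
        simpa using Finset.ext_iff.1 h.1 i
      have e2 : ((u i).2 = true) ↔ ((v i).2 = true) := by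
        simpa using Finset.ext_iff.1 h.2 i
      apply Prod.ext
      · cases h1 : (u i).1 <;> cases h2 : (v i).1 <;> simp_all
      · cases h1 : (u i).2 <;> cases h2 : (v i).2 <;> simp_all
  -- Step 2: ddp Y Z ≤ 2 ^ l
  have h2 : ddp Y Z ≤ 2 ^ l := by
    have := key_lemma (Finset.univ : Finset (Fin l)) Y Z
      (fun S _ => Finset.subset_univ S) (fun T _ => Finset.subset_univ T) hR
    simpa using this
  have hF2 : (F.card : ℝ) ≤ 2 ^ l := by
    have : F.card ≤ 2 ^ l := le_trans h1 h2
    exact_mod_cast this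
  -- Step 3: numeric
  have h3 : (0:ℝ) < 3 ^ l := by positivity
  rw [div_lt_iff₀ h3]
  calc (F.card : ℝ) ≤ 2 ^ l := hF2
    _ < (2:ℝ) ^ (-(l:ℝ)/2) * 3 ^ l := by
      have key : (2:ℝ) ^ (-(l:ℝ)/2) = ((2:ℝ) ^ ((-1:ℝ)/2)) ^ l := by
        rw [← Real.rpow_natCast ((2:ℝ) ^ ((-1:ℝ)/2)) l, ← Real.rpow_mul (by norm_num)]
        congr 1
        ring
      have hsqrt : Real.sqrt 2 < 3/2 := by
        rw [show (3/2:ℝ) = Real.sqrt ((3/2)^2) by rw [Real.sqrt_sq (by norm_num)]]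
        apply Real.sqrt_lt_sqrt (by norm_num)
        norm_num
      have hs0 : 0 < Real.sqrt 2 := Real.sqrt_pos.2 (by norm_num)
      have hc : (2:ℝ)/3 < (2:ℝ) ^ ((-1:ℝ)/2) := by
        rw [show ((-1:ℝ)/2) = -(1/2) by ring, Real.rpow_neg (by norm_num),
          ← Real.sqrt_eq_rpow, ← one_div]
        rw [div_lt_div_iff₀ (by norm_num) hs0]
        nlinarith [hsqrt]
      calc (2:ℝ)^l = (2/3:ℝ)^l * 3^l := by
            rw [div_pow]
            field_simp
        _ < ((2:ℝ)^((-1:ℝ)/2))^l * 3^l := by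
            apply mul_lt_mul_of_pos_right _ h3
            exact pow_lt_pow_left₀ hc (by norm_num) (by omega)
        _ = (2:ℝ)^(-(l:ℝ)/2) * 3^l := by rw [key]
end

section
/- Let n, s, κ be natural numbers with κ ≤ s and κ ≤ n, and let T ⊆ {1,…,n}. Then the number of vectors v ∈ {0,1}^n with Hamming weight at most s such that |supp(v) ∩ T| ≥ κ is at most C(|T|, κ) · ∑_{j=0}^{s−κ} C(n − κ, j). -/
/-- Let `κ ≤ s` and `κ ≤ n`, and `T ⊆ [n]`. The number of vectors `v ∈ {0,1}^n` with
Hamming weight at most `s` and `|supp(v) ∩ T| ≥ κ` is at most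
`C(|T|, κ) · ∑_{j=0}^{s−κ} C(n − κ, j)`. -/
theorem stmt_13 (n s κ : ℕ) (hκs : κ ≤ s) (hκn : κ ≤ n) (T : Finset (Fin n)) :
    (Finset.univ.filter fun v : Fin n → Bool =>
        (Finset.univ.filter fun i => v i = true).card ≤ s ∧
        κ ≤ ((Finset.univ.filter fun i => v i = true) ∩ T).card).card ≤
      T.card.choose κ * ∑ j ∈ Finset.range (s - κ + 1), (n - κ).choose j := by
  classical
  set supp : (Fin n → Bool) → Finset (Fin n) :=
    fun v => Finset.univ.filter fun i => v i = true with hsupp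
  set ch : (Fin n → Bool) → Finset (Fin n) := fun v =>
    if h : κ ≤ (supp v ∩ T).card then (Finset.exists_subset_card_eq h).choose else ∅
    with hch
  have chspec : ∀ v, κ ≤ (supp v ∩ T).card → ch v ⊆ supp v ∩ T ∧ (ch v).card = κ := by
    intro v h
    simp only [hch, dif_pos h]
    exact (Finset.exists_subset_card_eq h).choose_spec
  set S : Finset ((_ : Finset (Fin n)) × Finset (Fin n)) :=
    (T.powersetCard κ).sigma fun K =>
      (Finset.range (s - κ + 1)).biUnion fun j => (Finset.univ \ K).powersetCard j
    with hS
  have hle : (Finset.univ.filter fun v : Fin n → Bool =>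
        (Finset.univ.filter fun i => v i = true).card ≤ s ∧
        κ ≤ ((Finset.univ.filter fun i => v i = true) ∩ T).card).card ≤ S.card := by
    apply Finset.card_le_card_of_injOn (fun v => ⟨ch v, supp v \ ch v⟩)
    · intro v hv
      simp only [Finset.mem_coe, Finset.mem_filter] at hv
      obtain ⟨-, hs, hκ⟩ := hv
      obtain ⟨hsub, hcard⟩ := chspec v hκ
      have hsubsupp : ch v ⊆ supp v := hsub.trans Finset.inter_subset_left
      simp only [Finset.mem_coe, hS, Finset.mem_sigma, Finset.mem_powersetCard, Finset.mem_biUnion,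
        Finset.mem_range]
      refine ⟨⟨hsub.trans Finset.inter_subset_right, hcard⟩,
        (supp v \ ch v).card, ?_, ?_⟩
      · have h1 : (supp v \ ch v).card = (supp v).card - κ := by
          rw [Finset.card_sdiff_of_subset hsubsupp, hcard]
        have h2 : (supp v).card ≤ s := hs
        have h3 : κ ≤ (supp v).card :=
          hκ.trans (Finset.card_le_card Finset.inter_subset_left)
        omega
      · exact ⟨Finset.sdiff_subset_sdiff (Finset.subset_univ _) le_rfl, rfl⟩
    · intro v₁ hv₁ v₂ hv₂ heq
      simp only [Finset.mem_coe, Finset.mem_filter] at hv₁ hv₂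
      obtain ⟨-, -, hκ₁⟩ := hv₁
      obtain ⟨-, -, hκ₂⟩ := hv₂
      have h1 := (chspec v₁ hκ₁).1.trans Finset.inter_subset_left
      have h2 := (chspec v₂ hκ₂).1.trans Finset.inter_subset_left
      have hK : ch v₁ = ch v₂ := congrArg Sigma.fst heq
      have hR : supp v₁ \ ch v₁ = supp v₂ \ ch v₂ := by
        have := congrArg Sigma.snd heq; simpa using this
      have hsupp_eq : supp v₁ = supp v₂ := by
        have e1 := Finset.sdiff_union_of_subset h1
        have e2 := Finset.sdiff_union_of_subset h2
        rw [← e1, ← e2, hR, hK]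
      funext i
      have : (i ∈ supp v₁) = (i ∈ supp v₂) := by rw [hsupp_eq]
      simp only [hsupp, Finset.mem_filter, Finset.mem_univ, true_and] at this
      cases hb : v₁ i <;> cases hb2 : v₂ i <;> simp_all
  refine hle.trans ?_
  rw [hS, Finset.card_sigma]
  have hcardK : ∀ K ∈ T.powersetCard κ,
      ((Finset.range (s - κ + 1)).biUnion fun j => (Finset.univ \ K).powersetCard j).card
        = ∑ j ∈ Finset.range (s - κ + 1), (n - κ).choose j := by
    intro K hK
    rw [Finset.mem_powersetCard] at hK
    rw [Finset.card_biUnion]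
    · apply Finset.sum_congr rfl
      intro j _
      rw [Finset.card_powersetCard, Finset.card_sdiff_of_subset (Finset.subset_univ _),
        Finset.card_univ, Fintype.card_fin, hK.2]
    · intro a _ b _ hab
      apply Finset.disjoint_left.mpr
      intro x hxa hxb
      rw [Finset.mem_powersetCard] at hxa hxb
      exact hab (hxa.2 ▸ hxb.2)
  rw [Finset.sum_congr rfl hcardK, Finset.sum_const, Finset.card_powersetCard, smul_eq_mul]
end

section
/- For all natural numbers n and s with 1 ≤ s and s ≤ n^{3/10} (as real numbers), ∑_{i=0}^{⌊s/2⌋} C(n, i) ≤ n^{1 − s/5} · ∑_{i=0}^{s} C(n, i), as an inequality of real numbers. -/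
/-- Ratio bound: for `i + d ≤ s ≤ n`, `C(n,i) (n-s)^d ≤ C(n,i+d) s^d`. -/
lemma choose_ratio_bound (n s i : ℕ) : ∀ d, i + d ≤ s → s ≤ n →
    n.choose i * (n - s) ^ d ≤ n.choose (i + d) * s ^ d := by
  intro d
  induction d with
  | zero => simp
  | succ d ih =>
    intro h hsn
    have h1 : i + d ≤ s := by omega
    have key : n.choose (i + d) * (n - s) ≤ n.choose (i + d + 1) * s := by
      calc n.choose (i + d) * (n - s)
          ≤ n.choose (i + d) * (n - (i + d)) :=
            Nat.mul_le_mul_left _ (Nat.sub_le_sub_left (by omega) n)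
        _ = n.choose (i + d + 1) * (i + d + 1) :=
            (Nat.choose_succ_right_eq n (i + d)).symm
        _ ≤ n.choose (i + d + 1) * s := Nat.mul_le_mul_left _ (by omega)
    calc n.choose i * (n - s) ^ (d + 1)
        = n.choose i * (n - s) ^ d * (n - s) := by ring
      _ ≤ n.choose (i + d) * s ^ d * (n - s) :=
          Nat.mul_le_mul_right _ (ih h1 hsn)
      _ = n.choose (i + d) * (n - s) * s ^ d := by ring
      _ ≤ n.choose (i + d + 1) * s * s ^ d := Nat.mul_le_mul_right _ key
      _ = n.choose (i + (d + 1)) * s ^ (d + 1) := by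
          rw [show i + (d + 1) = i + d + 1 by omega]; ring

/-- For natural numbers `n, s` with `1 ≤ s` and `s ≤ n^{3/10}` (as reals),
`∑_{i=0}^{⌊s/2⌋} C(n, i) ≤ n^{1 − s/5} · ∑_{i=0}^{s} C(n, i)` as real numbers. -/
theorem stmt_16 (n s : ℕ) (hs : 1 ≤ s) (hsn : (s : ℝ) ≤ (n : ℝ) ^ ((3 : ℝ) / 10)) :
    (∑ i ∈ Finset.range (s / 2 + 1), (n.choose i : ℝ)) ≤
      (n : ℝ) ^ (1 - (s : ℝ) / 5) * ∑ i ∈ Finset.range (s + 1), (n.choose i : ℝ) := by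
  -- n ≥ 1
  have hn1 : 1 ≤ n := by
    by_contra h
    have hn0 : n = 0 := by omega
    rw [hn0] at hsn
    rw [Nat.cast_zero, Real.zero_rpow (by norm_num)] at hsn
    have : (1 : ℝ) ≤ (s : ℝ) := by exact_mod_cast hs
    linarith
  -- s^10 ≤ n^3 in ℕ
  have hsn10 : s ^ 10 ≤ n ^ 3 := by
    have h0 : (0 : ℝ) ≤ (n : ℝ) := Nat.cast_nonneg n
    have h1 : ((s : ℝ)) ^ (10 : ℕ) ≤ ((n : ℝ) ^ ((3 : ℝ) / 10)) ^ (10 : ℕ) :=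
      pow_le_pow_left₀ (Nat.cast_nonneg s) hsn 10
    have h2 : ((n : ℝ) ^ ((3 : ℝ) / 10)) ^ (10 : ℕ) = (n : ℝ) ^ (3 : ℕ) := by
      rw [← Real.rpow_natCast ((n : ℝ) ^ ((3 : ℝ) / 10)) 10, ← Real.rpow_mul h0,
        ← Real.rpow_natCast (n : ℝ) 3]
      norm_num
    rw [h2] at h1
    exact_mod_cast h1
  rcases eq_or_lt_of_le hs with h1 | hs2
  · -- case s = 1
    have hseq : s = 1 := h1.symm
    subst hseq
    simp only [Nat.reduceDiv, zero_add, Finset.range_one, Finset.sum_singleton,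
      Nat.choose_zero_right, Nat.cast_one]
    have hrp : (1 : ℝ) ≤ (n : ℝ) ^ (1 - (1 : ℝ) / 5) := by
      apply Real.one_le_rpow (by exact_mod_cast hn1) (by norm_num)
    have hsum : (1 : ℝ) ≤ ∑ i ∈ Finset.range 2, (n.choose i : ℝ) := by
      rw [Finset.sum_range_succ, Finset.sum_range_one]
      simp only [Nat.choose_zero_right, Nat.choose_one_right, Nat.cast_one]
      have : (0 : ℝ) ≤ (n : ℝ) := Nat.cast_nonneg n
      linarith
    calc (1 : ℝ) ≤ 1 * 1 := by norm_num
      _ ≤ (n : ℝ) ^ (1 - (1 : ℝ) / 5) * ∑ i ∈ Finset.range 2, (n.choose i : ℝ) := by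
          push_cast at hsum ⊢
          exact mul_le_mul hrp hsum (by norm_num) (by linarith)
  · -- case s ≥ 2
    have hs2' : 2 ≤ s := hs2
    have hn11 : 11 ≤ n := by
      have h1 : 2 ^ 10 ≤ s ^ 10 := Nat.pow_le_pow_left hs2' 10
      by_contra h
      have h2 : n ^ 3 ≤ 10 ^ 3 := Nat.pow_le_pow_left (by omega) 3
      omega
    have hs3n : s ^ 3 ≤ n := by
      have h9 : (s ^ 3) ^ 3 ≤ n ^ 3 := by
        calc (s ^ 3) ^ 3 = s ^ 9 := by ring
          _ ≤ s ^ 10 := Nat.pow_le_pow_right (by omega) (by omega)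
          _ ≤ n ^ 3 := hsn10
      exact le_of_pow_le_pow_left₀ (by norm_num) (Nat.zero_le n) h9
    have h2sn : 2 * s ≤ n := by
      calc 2 * s ≤ s * s := Nat.mul_le_mul_right s hs2'
        _ ≤ s * s * s := Nat.le_mul_of_pos_right _ (by omega)
        _ = s ^ 3 := by ring
        _ ≤ n := hs3n
    set m := s / 2 with hm
    set t := s - m with ht
    have hmt : m + t = s := by omega
    have hm1s : m + 1 ≤ s := by omega
    have h2t : s ≤ 2 * t := by omega
    have ht1 : 1 ≤ t := by omega
    -- choose n i ≤ choose n m for i ≤ m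
    have hmono : ∀ i ≤ m, n.choose i ≤ n.choose m := by
      intro i hi
      have hd := choose_ratio_bound n s i (m - i) (by omega) (by omega)
      rw [show i + (m - i) = m by omega] at hd
      have hpow : s ^ (m - i) ≤ (n - s) ^ (m - i) :=
        Nat.pow_le_pow_left (by omega) _
      have hpos : 0 < (n - s) ^ (m - i) := Nat.pow_pos (by omega)
      have : n.choose i * (n - s) ^ (m - i) ≤ n.choose m * (n - s) ^ (m - i) :=
        le_trans hd (Nat.mul_le_mul_left _ hpow)
      exact Nat.le_of_mul_le_mul_right this hpos
    -- sum bound in ℕ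
    have hsumN : (∑ i ∈ Finset.range (m + 1), n.choose i) ≤ (m + 1) * n.choose m := by
      calc (∑ i ∈ Finset.range (m + 1), n.choose i)
          ≤ ∑ _i ∈ Finset.range (m + 1), n.choose m :=
            Finset.sum_le_sum (fun i hi => hmono i (by simpa using Nat.lt_succ_iff.mp (Finset.mem_range.mp hi)))
        _ = (m + 1) * n.choose m := by
            rw [Finset.sum_const, Finset.card_range]; ring
    -- ratio bound m → s in ℕ
    have hrat : n.choose m * (n - s) ^ t ≤ n.choose s * s ^ t := by
      have := choose_ratio_bound n s m t (by omega) (by omega)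
      rwa [hmt] at this
    -- move to ℝ
    have hnsR : ((n - s : ℕ) : ℝ) = (n : ℝ) - s := by
      rw [Nat.cast_sub (by omega)]
    have hnspos : (0 : ℝ) < (n : ℝ) - s := by
      have : (s : ℝ) < n := by exact_mod_cast (by omega : s < n)
      linarith
    have hratR : (n.choose m : ℝ) ≤ (n.choose s : ℝ) * ((s : ℝ) / ((n : ℝ) - s)) ^ t := by
      rw [div_pow, ← mul_div_assoc, le_div_iff₀ (by positivity)]
      have := hrat
      have hcast : (n.choose m : ℝ) * ((n : ℝ) - s) ^ t ≤ (n.choose s : ℝ) * (s : ℝ) ^ t := by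
        rw [← hnsR]
        exact_mod_cast hrat
      linarith [hcast]
    -- key scalar bound
    have hP : (s : ℝ) / ((n : ℝ) - s) ≤ (n : ℝ) ^ (-(2 : ℝ) / 5) := by
      have hnpos : (0 : ℝ) < n := by positivity
      have hhalf : (n : ℝ) / 2 ≤ (n : ℝ) - s := by
        have : (2 : ℝ) * s ≤ n := by exact_mod_cast h2sn
        linarith
      have h2n : (2 : ℝ) ≤ (n : ℝ) ^ ((3 : ℝ) / 10) := by
        have : (2 : ℝ) ≤ (s : ℝ) := by exact_mod_cast hs2'
        linarith
      calc (s : ℝ) / ((n : ℝ) - s) ≤ (n : ℝ) ^ ((3 : ℝ) / 10) / ((n : ℝ) / 2) := by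
            exact div_le_div₀ (by positivity) hsn (by positivity) hhalf
        _ = 2 * (n : ℝ) ^ ((3 : ℝ) / 10) / n := by ring
        _ ≤ (n : ℝ) ^ ((3 : ℝ) / 10) * (n : ℝ) ^ ((3 : ℝ) / 10) / n := by
            apply div_le_div_of_nonneg_right _ hnpos.le
            exact mul_le_mul_of_nonneg_right h2n (by positivity)
        _ = (n : ℝ) ^ (-(2 : ℝ) / 5) := by
            rw [← Real.rpow_add hnpos,
              show (3 : ℝ) / 10 + 3 / 10 = -(2 : ℝ) / 5 + 1 by norm_num,
              Real.rpow_add hnpos, Real.rpow_one, mul_div_assoc,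
              div_self (ne_of_gt hnpos), mul_one]
    have hPnonneg : (0 : ℝ) ≤ (s : ℝ) / ((n : ℝ) - s) := by positivity
    have hkey : ((m : ℝ) + 1) * ((s : ℝ) / ((n : ℝ) - s)) ^ t ≤ (n : ℝ) ^ (1 - (s : ℝ) / 5) := by
      have hm1 : ((m : ℝ) + 1) ≤ (n : ℝ) ^ ((3 : ℝ) / 10) := by
        have : ((m : ℝ) + 1) ≤ (s : ℝ) := by exact_mod_cast hm1s
        linarith
      have hPt : ((s : ℝ) / ((n : ℝ) - s)) ^ t ≤ (n : ℝ) ^ (-(2 : ℝ) / 5 * t) := by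
        calc ((s : ℝ) / ((n : ℝ) - s)) ^ t ≤ ((n : ℝ) ^ (-(2 : ℝ) / 5)) ^ t :=
              pow_le_pow_left₀ hPnonneg hP t
          _ = (n : ℝ) ^ (-(2 : ℝ) / 5 * t) := by
              rw [← Real.rpow_natCast ((n : ℝ) ^ (-(2 : ℝ) / 5)) t,
                ← Real.rpow_mul (by positivity)]
      calc ((m : ℝ) + 1) * ((s : ℝ) / ((n : ℝ) - s)) ^ t
          ≤ (n : ℝ) ^ ((3 : ℝ) / 10) * (n : ℝ) ^ (-(2 : ℝ) / 5 * t) := by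
            apply mul_le_mul hm1 hPt (by positivity) (by positivity)
        _ = (n : ℝ) ^ ((3 : ℝ) / 10 + -(2 : ℝ) / 5 * t) := by
            rw [← Real.rpow_add (by positivity)]
        _ ≤ (n : ℝ) ^ (1 - (s : ℝ) / 5) := by
            apply Real.rpow_le_rpow_of_exponent_le (by exact_mod_cast hn1)
            have h2t' : (s : ℝ) ≤ 2 * t := by exact_mod_cast h2t
            linarith
    -- chain
    have hchooseSum : (n.choose s : ℝ) ≤ ∑ i ∈ Finset.range (s + 1), (n.choose i : ℝ) := by
      apply Finset.single_le_sum (f := fun i => (n.choose i : ℝ))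
      · intro i _; positivity
      · exact Finset.mem_range.mpr (by omega)
    have hchoosenonneg : (0 : ℝ) ≤ (n.choose s : ℝ) := by positivity
    calc (∑ i ∈ Finset.range (s / 2 + 1), (n.choose i : ℝ))
        ≤ ((m : ℝ) + 1) * (n.choose m : ℝ) := by exact_mod_cast hsumN
      _ ≤ ((m : ℝ) + 1) * ((n.choose s : ℝ) * ((s : ℝ) / ((n : ℝ) - s)) ^ t) :=
          mul_le_mul_of_nonneg_left hratR (by positivity)
      _ = (((m : ℝ) + 1) * ((s : ℝ) / ((n : ℝ) - s)) ^ t) * (n.choose s : ℝ) := by ring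
      _ ≤ (n : ℝ) ^ (1 - (s : ℝ) / 5) * (n.choose s : ℝ) :=
          mul_le_mul_of_nonneg_right hkey hchoosenonneg
      _ ≤ (n : ℝ) ^ (1 - (s : ℝ) / 5) * ∑ i ∈ Finset.range (s + 1), (n.choose i : ℝ) :=
          mul_le_mul_of_nonneg_left hchooseSum (by positivity)
end

section
/- There exists a natural number n₀ such that for all n ≥ n₀ and all natural numbers s with 1 ≤ s ≤ n the following holds. Let m = n² and N = ⌈10 n ln n⌉, and let M be a random n×m matrix whose m columns are chosen independently and uniformly at random from the set of vectors in {0,1}^n of Hamming weight at most s, viewed as vectors in ℝ^n. Then Pr_M[ Pr_S[ the columns of M indexed by S span ℝ^n ] ≥ 1/10 ] ≥ 1/10, where S is chosen uniformly at random among all N-element subsets of {1,…,m}, independently of M. -/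
open Finset

namespace Stmt17Aux

noncomputable section

def colF {n : ℕ} (b : Fin n → Bool) : Fin n → ℝ := fun i => if b i then 1 else 0
def wt {n : ℕ} (b : Fin n → Bool) : ℕ := #(univ.filter (fun i => b i = true))
def Aset (n s : ℕ) : Finset (Fin n → Bool) := univ.filter (fun b => wt b ≤ s)

open scoped Classical

def suppB {n : ℕ} (b : Fin n → Bool) : Finset (Fin n) := univ.filter (fun i => b i = true)
lemma wt_eq {n : ℕ} (b : Fin n → Bool) : wt b = #(suppB b) := rfl
lemma mem_suppB {n : ℕ} {b : Fin n → Bool} {i : Fin n} : i ∈ suppB b ↔ b i = true := by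
  simp [suppB]

def Yset (n s : ℕ) (I₀ : Finset (Fin n)) : Finset (Fin n → Bool) :=
  univ.filter (fun c => (∀ i ∈ I₀, c i = false) ∧ wt c < s)
def Xset (n s : ℕ) (I₀ : Finset (Fin n)) : Finset (Fin n → Bool) :=
  univ.filter (fun c => (∀ i ∈ I₀, c i = false) ∧ wt c = s)

section
variable {n s : ℕ}

lemma suppB_update_true (b : Fin n → Bool) (i : Fin n) :
    suppB (Function.update b i true) = insert i (suppB b) := by
  ext j
  simp only [suppB, mem_filter, mem_univ, true_and, mem_insert, Function.update]
  by_cases h : j = i <;> simp [h]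

lemma suppB_update_false (b : Fin n → Bool) (i : Fin n) :
    suppB (Function.update b i false) = (suppB b).erase i := by
  ext j
  simp only [suppB, mem_filter, mem_univ, true_and, mem_erase, Function.update]
  by_cases h : j = i <;> simp [h]


def offP (I₀ : Finset (Fin n)) (b : Fin n → Bool) : Fin n → Bool :=
  fun i => if i ∈ I₀ then false else b i


lemma suppB_offP (I₀ : Finset (Fin n)) (b : Fin n → Bool) :
    suppB (offP I₀ b) = suppB b \ I₀ := by
  ext i
  simp only [suppB, offP, mem_filter, mem_univ, true_and, mem_sdiff]
  by_cases h : i ∈ I₀ <;> simp [h]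


lemma claimB (I₀ : Finset (Fin n)) (W : Submodule ℝ (Fin n → ℝ))
    (hind : ∀ u : Fin n → ℝ, u ∈ W → (∀ i, i ∉ I₀ → u i = 0) → u = 0) :
    #(((Aset n s).filter (fun b => colF b ∈ W)).filter (fun b => wt (offP I₀ b) < s))
      ≤ #(Yset n s I₀) := by
  apply Finset.card_le_card_of_injOn (offP I₀)
  · intro b hb
    simp only [Finset.mem_coe, mem_filter, Aset, mem_univ, true_and] at hb
    simp only [Finset.mem_coe, Yset, mem_filter, mem_univ, true_and]
    exact ⟨fun i hi => by simp [offP, hi], hb.2⟩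
  · intro b hb b' hb' heq
    simp only [Finset.mem_coe, mem_filter, Aset, mem_univ, true_and] at hb hb'
    have hu : colF b - colF b' ∈ W := W.sub_mem hb.1.2 hb'.1.2
    have hu0 : ∀ i, i ∉ I₀ → (colF b - colF b') i = 0 := by
      intro i hi
      have : offP I₀ b i = offP I₀ b' i := congrFun heq i
      simp only [offP, if_neg hi] at this
      simp [colF, Pi.sub_apply, this]
    have hzz := hind _ hu hu0
    funext i
    have h2 : colF b i = colF b' i := by
      have := congrFun hzz i
      simpa [Pi.sub_apply, sub_eq_zero] using this
    by_cases h : b i <;> by_cases h' : b' i <;> simp_all [colF, h, h']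


lemma claimA2 (I₀ : Finset (Fin n)) (W : Submodule ℝ (Fin n → ℝ)) :
    ((Aset n s).filter (fun b => colF b ∈ W)).filter (fun b => ¬ wt (offP I₀ b) < s)
      ⊆ Xset n s I₀ := by
  intro b hb
  simp only [mem_filter, Aset, mem_univ, true_and, not_lt] at hb
  have hwb : wt b ≤ s := hb.1.1
  have hoff : s ≤ wt (offP I₀ b) := hb.2
  have h1 : wt (offP I₀ b) ≤ wt b := by
    rw [wt_eq, wt_eq, suppB_offP]; exact card_le_card sdiff_subset
  have heq : suppB b \ I₀ = suppB b := by
    apply Finset.eq_of_subset_of_card_le sdiff_subset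
    rw [← suppB_offP, ← wt_eq, ← wt_eq]
    exact le_trans hwb hoff
  simp only [Xset, mem_filter, mem_univ, true_and]
  constructor
  · intro i hi
    by_contra hbi
    have hbi' : b i = true := by revert hbi; cases b i <;> simp
    have : i ∈ suppB b := by simp [suppB, hbi']
    rw [← heq] at this
    exact (mem_sdiff.1 this).2 hi
  · exact le_antisymm hwb (le_trans hoff h1)

-- claim D : |Xset| ≤ n * |Yset|
lemma claimD (hn : 1 ≤ n) (hs1 : 1 ≤ s) (I₀ : Finset (Fin n)) :
    #(Xset n s I₀) ≤ n * #(Yset n s I₀) := by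
  set pick : (Fin n → Bool) → Fin n :=
    fun b => if h : (suppB b).Nonempty then (suppB b).min' h else ⟨0, hn⟩ with hpick
  have hpickmem : ∀ b : Fin n → Bool, (suppB b).Nonempty → b (pick b) = true := by
    intro b hb
    rw [hpick]
    simp only [dif_pos hb]
    exact mem_suppB.1 ((suppB b).min'_mem hb)
  have hXsupp : ∀ b ∈ Xset n s I₀, (suppB b).Nonempty := by
    intro b hb
    simp only [Xset, mem_filter] at hb
    rw [← Finset.card_pos, ← wt_eq, hb.2.2]
    exact hs1
  have h : #(Xset n s I₀) ≤ #((Yset n s I₀) ×ˢ (univ : Finset (Fin n))) := by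
    apply Finset.card_le_card_of_injOn (fun b => (Function.update b (pick b) false, pick b))
    · intro b hb
      simp only [Finset.mem_coe] at hb
      have hne := hXsupp b hb
      simp only [Xset, mem_filter, mem_univ, true_and] at hb
      simp only [Finset.mem_coe, mem_product, Yset, mem_filter, mem_univ, true_and, and_true]
      refine ⟨fun i hi => ?_, ?_⟩
      · rw [Function.update]
        by_cases h : i = pick b <;> simp [h, hb.1 i hi]
      · rw [wt_eq, suppB_update_false, card_erase_of_mem (mem_suppB.2 (hpickmem b hne)),
          ← wt_eq, hb.2]
        omega
    · intro b hb b' hb' heq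
      simp only [Finset.mem_coe] at hb hb'
      have h2 : pick b = pick b' := (Prod.ext_iff.1 heq).2
      have h1 : Function.update b (pick b) false = Function.update b' (pick b) false := by
        have := (Prod.ext_iff.1 heq).1
        simp only at this
        rw [this, h2]
      funext i
      by_cases h : i = pick b
      · rw [h, hpickmem b (hXsupp b hb)]
        rw [h2]
        exact (hpickmem b' (hXsupp b' hb')).symm
      · have := congrFun h1 i
        simpa [Function.update, h] using this
  rwa [card_product, card_univ, Fintype.card_fin, mul_comm] at h

-- claim C : |Xset| + (1 + |I₀|) * |Yset| ≤ |Aset|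
lemma claimC (I₀ : Finset (Fin n)) :
    #(Xset n s I₀) + (1 + #I₀) * #(Yset n s I₀) ≤ #(Aset n s) := by
  set T : Finset ((Fin n → Bool) × Option (Fin n)) :=
    ((Xset n s I₀ ∪ Yset n s I₀) ×ˢ {(none : Option (Fin n))}) ∪
      (Yset n s I₀ ×ˢ I₀.image some) with hT
  have hXY : Disjoint (Xset n s I₀) (Yset n s I₀) := by
    rw [Finset.disjoint_left]
    intro b hb hb'
    simp only [Xset, Yset, mem_filter] at hb hb'
    omega
  have hcardT : #T = #(Xset n s I₀) + (1 + #I₀) * #(Yset n s I₀) := by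
    rw [hT, card_union_of_disjoint, card_product, card_product,
      card_union_of_disjoint hXY, card_singleton,
      card_image_of_injective _ (Option.some_injective _)]
    · ring
    · rw [Finset.disjoint_left]
      rintro ⟨b, o⟩ h1 h2
      simp only [mem_product, mem_singleton, mem_image] at h1 h2
      obtain ⟨i, _, hi⟩ := h2.2
      rw [h1.2] at hi
      cases hi
  rw [← hcardT]
  apply Finset.card_le_card_of_injOn (fun p => p.2.elim p.1 (fun i => Function.update p.1 i true))
  · rintro ⟨b, o⟩ hmem
    simp only [Finset.mem_coe, hT, mem_union, mem_product, mem_singleton, mem_image] at hmem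
    rcases hmem with ⟨hb, rfl⟩ | ⟨hb, i, hiI, rfl⟩
    · simp only [Finset.mem_coe, Option.elim, Aset, mem_filter, mem_univ, true_and]
      rcases hb with h | h <;> simp only [Xset, Yset, mem_filter] at h <;> omega
    · simp only [Finset.mem_coe, Option.elim, Aset, mem_filter, mem_univ, true_and]
      simp only [Yset, mem_filter] at hb
      rw [wt_eq, suppB_update_true]
      calc #(insert i (suppB b)) ≤ #(suppB b) + 1 := card_insert_le _ _
        _ ≤ s := by rw [← wt_eq]; omega
  · rintro ⟨b, o⟩ hmem ⟨b', o'⟩ hmem' heq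
    simp only [Finset.mem_coe, hT, mem_union, mem_product, mem_singleton, mem_image] at hmem hmem'
    simp only [Option.elim] at heq
    have hIfalse : ∀ i ∈ I₀, b i = false := by
      rcases hmem with ⟨hb, _⟩ | ⟨hb, _⟩
      · rcases hb with h | h <;> (simp only [Xset, Yset, mem_filter] at h; exact h.2.1)
      · simp only [Yset, mem_filter] at hb; exact hb.2.1
    have hIfalse' : ∀ i ∈ I₀, b' i = false := by
      rcases hmem' with ⟨hb, _⟩ | ⟨hb, _⟩
      · rcases hb with h | h <;> (simp only [Xset, Yset, mem_filter] at h; exact h.2.1)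
      · simp only [Yset, mem_filter] at hb; exact hb.2.1
    rcases hmem with ⟨hb, rfl⟩ | ⟨hb, i, hiI, rfl⟩ <;>
      rcases hmem' with ⟨hb', rfl⟩ | ⟨hb', i', hiI', rfl⟩ <;>
        simp only [Option.elim] at heq
    · rw [heq]
    · exfalso
      have h1 : b i' = true := by rw [heq]; simp [Function.update]
      rw [hIfalse i' hiI'] at h1; exact Bool.noConfusion h1
    · exfalso
      have h1 : b' i = true := by rw [← heq]; simp [Function.update]
      rw [hIfalse' i hiI] at h1; exact Bool.noConfusion h1
    · have hii : i = i' := by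
        by_contra hne
        have h1 : Function.update b i true i = Function.update b' i' true i := by rw [heq]
        rw [Function.update_self, Function.update_of_ne hne, hIfalse' i hiI] at h1
        exact Bool.noConfusion h1
      subst hii
      have hbb : b = b' := by
        funext j
        by_cases hj : j = i
        · rw [hj, hIfalse i hiI, hIfalse' i hiI]
        · have h1 : Function.update b i true j = Function.update b' i true j := by rw [heq]
          simpa [Function.update, hj] using h1
      rw [hbb]


end

theorem exists_I0 {n : ℕ} (W : Submodule ℝ (Fin n → ℝ)) :
    ∃ I₀ : Finset (Fin n), I₀.card = n - Module.finrank ℝ W ∧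
      ∀ u : Fin n → ℝ, u ∈ W → (∀ i, i ∉ I₀ → u i = 0) → u = 0 := by
  classical
  set Q := (Fin n → ℝ) ⧸ W
  set π : (Fin n → ℝ) →ₗ[ℝ] Q := W.mkQ with hπ
  set t : Set Q := Set.range (fun i : Fin n => π (Pi.single i 1)) with ht
  have hspan_t : Submodule.span ℝ t = ⊤ := by
    have h1 : Submodule.span ℝ (Set.range fun i : Fin n => (Pi.single i 1 : Fin n → ℝ)) = ⊤ := by
      have h : (fun i : Fin n => (Pi.single i 1 : Fin n → ℝ)) = ⇑(Pi.basisFun ℝ (Fin n)) := by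
        funext i; rw [Pi.basisFun_apply]
      rw [h, (Pi.basisFun ℝ (Fin n)).span_eq]
    have h2 : t = π '' (Set.range fun i : Fin n => (Pi.single i 1 : Fin n → ℝ)) := by
      rw [ht, ← Set.range_comp]; rfl
    rw [h2, ← Submodule.map_span, h1, Submodule.map_top, Submodule.range_mkQ]
  obtain ⟨b, hbt, hbspan, hbli⟩ := exists_linearIndependent ℝ t
  rw [hspan_t] at hbspan
  have hbfin : b.Finite := (Set.finite_range _).subset hbt
  haveI : Fintype b := hbfin.fintype
  have hbasis : Module.Basis b ℝ Q := Module.Basis.mk hbli (by rw [Subtype.range_coe, hbspan])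
  have hcardb : Fintype.card b = n - Module.finrank ℝ W := by
    have h1 : Module.finrank ℝ Q = Fintype.card b := Module.finrank_eq_card_basis hbasis
    have h2 : Module.finrank ℝ Q + Module.finrank ℝ W = n := by
      have := Submodule.finrank_quotient_add_finrank W
      rwa [Module.finrank_pi, Fintype.card_fin] at this
    omega
  have hchoice : ∀ x : b, ∃ i : Fin n, π (Pi.single i 1) = (x : Q) := fun x => hbt x.2
  choose f hf using hchoice
  have hfinj : Function.Injective f := by
    intro x y hxy
    have : (x : Q) = (y : Q) := by rw [← hf x, ← hf y, hxy]
    exact Subtype.ext this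
  refine ⟨Finset.univ.image f, ?_, ?_⟩
  · rw [Finset.card_image_of_injective _ hfinj, Finset.card_univ, hcardb]
  · intro u huW hu0
    have hrepr : u = ∑ i ∈ Finset.univ.image f, u i • (Pi.single i 1 : Fin n → ℝ) := by
      funext j
      rw [Finset.sum_apply]
      by_cases hj : j ∈ Finset.univ.image f
      · rw [Finset.sum_eq_single j]
        · simp
        · intro i _ hij; simp [Pi.single_apply, hij.symm]
        · intro h; exact absurd hj h
      · rw [hu0 j hj]
        apply (Finset.sum_eq_zero _).symm
        intro i hi
        have : i ≠ j := by rintro rfl; exact hj hi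
        simp [Pi.single_apply, this]
    have hπu : π u = 0 := by
      rw [hπ]; exact (Submodule.Quotient.mk_eq_zero W).2 huW
    have hsum : ∑ x : b, u (f x) • (x : Q) = 0 := by
      rw [← hπu]
      conv_rhs => rw [hrepr]
      rw [map_sum, Finset.sum_image (fun x _ y _ h => hfinj h)]
      congr 1; funext x
      rw [map_smul, hf]
    have hzero : ∀ x : b, u (f x) = 0 :=
      Fintype.linearIndependent_iff.1 hbli (fun x => u (f x)) hsum
    funext j
    by_cases hj : j ∈ Finset.univ.image f
    · obtain ⟨x, _, rfl⟩ := Finset.mem_image.1 hj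
      exact hzero x
    · exact hu0 j hj


-- KEY COUNTING LEMMA
theorem key_count {n s : ℕ} (hn : 1 ≤ n) (hs1 : 1 ≤ s)
    (W : Submodule ℝ (Fin n → ℝ)) (hW : W ≠ ⊤) :
    (#((Aset n s).filter (fun b => colF b ∈ W)) : ℝ) ≤
      (1 - ((n - Module.finrank ℝ W : ℕ) : ℝ) / (4 * n)) * #(Aset n s) := by
  obtain ⟨I₀, hcard, hind⟩ := exists_I0 W
  set r := Module.finrank ℝ W with hr
  have hrn : r < n := by
    have := Submodule.finrank_lt (K := ℝ) (V := Fin n → ℝ) hW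
    rwa [Module.finrank_pi, Fintype.card_fin] at this
  set d := n - r with hd
  have hd1 : 1 ≤ d := by omega
  have hdn : d ≤ n := by omega
  set AW := (Aset n s).filter (fun b => colF b ∈ W) with hAW
  set x := #(Xset n s I₀) with hx
  set y := #(Yset n s I₀) with hy
  have haw : #AW ≤ x + y := by
    rw [← Finset.card_filter_add_card_filter_not (s := AW)
      (p := fun b => wt (offP I₀ b) < s)]
    have h1 : #(AW.filter (fun b => wt (offP I₀ b) < s)) ≤ y := claimB (s := s) I₀ W hind
    have h2 : #(AW.filter (fun b => ¬ wt (offP I₀ b) < s)) ≤ x :=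
      Finset.card_le_card (claimA2 (s := s) I₀ W)
    omega
  have ha : x + (1 + d) * y ≤ #(Aset n s) := by
    have := claimC (s := s) I₀
    rwa [hcard] at this
  have hxny : x ≤ n * y := claimD hn hs1 I₀
  -- real arithmetic
  have hn' : (1:ℝ) ≤ n := by exact_mod_cast hn
  have hd1' : (1:ℝ) ≤ d := by exact_mod_cast hd1
  have hdn' : (d:ℝ) ≤ n := by exact_mod_cast hdn
  have hx' : (x:ℝ) ≤ n * y := by exact_mod_cast hxny
  have hy0 : (0:ℝ) ≤ y := by positivity
  have hx0 : (0:ℝ) ≤ x := by positivity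
  have ha' : (x:ℝ) + (1 + d) * y ≤ #(Aset n s) := by exact_mod_cast ha
  have h4n : (0:ℝ) < 4 * n := by linarith
  have hfrac : ((d:ℝ)) / (4 * n) ≤ 1 := by
    rw [div_le_one h4n]; linarith
  have key2 : (4*(n:ℝ)) * (x + y) ≤ (4*n - d) * (x + (1+d)*y) := by
    nlinarith [mul_nonneg (by linarith : (0:ℝ) ≤ (d:ℝ)) (sub_nonneg.2 hx'),
      mul_nonneg (mul_nonneg (by linarith : (0:ℝ) ≤ (d:ℝ))
        (by linarith : (0:ℝ) ≤ 3*(n:ℝ) - 1 - d)) hy0]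
  have key : (x:ℝ) + y ≤ (1 - (d:ℝ)/(4*n)) * (x + (1+d)*y) := by
    have hrw : (1 - (d:ℝ)/(4*n)) = (4*n - d)/(4*n) := by field_simp
    rw [hrw, div_mul_eq_mul_div, le_div_iff₀ h4n]
    linarith [key2]
  have hfac0 : (0:ℝ) ≤ 1 - (d:ℝ)/(4*n) := by linarith
  calc (#AW : ℝ) ≤ x + y := by exact_mod_cast haw
    _ ≤ (1 - (d:ℝ)/(4*n)) * (x + (1+d)*y) := key
    _ ≤ (1 - (d:ℝ)/(4*n)) * #(Aset n s) := by
        apply mul_le_mul_of_nonneg_left _ hfac0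
        exact ha'
    _ = (1 - ((n - Module.finrank ℝ W : ℕ) : ℝ) / (4 * n)) * #(Aset n s) := rfl


noncomputable def pot (n : ℕ) (W : Submodule ℝ (Fin n → ℝ)) : ℝ :=
  (1 + 1/(n:ℝ)) ^ (n - Module.finrank ℝ W) - 1

lemma geom_aux {z : ℝ} (hz : 1 ≤ z) (k : ℕ) :
    z ^ (k+1) - 1 ≤ ((k:ℝ)+1) * z ^ k * (z - 1) := by
  induction k with
  | zero => simp
  | succ k ih =>
    have hz0 : (0:ℝ) ≤ z := by linarith
    have h2 : (1:ℝ) ≤ z ^ (k+1) := one_le_pow₀ hz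
    calc z ^ (k+2) - 1 = z * (z ^ (k+1) - 1) + (z - 1) := by ring
      _ ≤ z * (((k:ℝ)+1) * z ^ k * (z - 1)) + (z - 1) := by nlinarith [mul_le_mul_of_nonneg_left ih hz0]
      _ = ((k:ℝ)+1) * z ^ (k+1) * (z - 1) + 1 * (z - 1) := by ring
      _ ≤ ((k:ℝ)+1) * z ^ (k+1) * (z - 1) + z ^ (k+1) * (z - 1) := by
          apply add_le_add_right
          apply mul_le_mul_of_nonneg_right h2 (by linarith)
      _ = ((k:ℝ)+1+1) * z ^ (k+1) * (z - 1) := by ring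
      _ = (((k+1:ℕ):ℝ)+1) * z ^ (k+1) * (z - 1) := by push_cast; ring

lemma finrank_pi_fin (n : ℕ) : Module.finrank ℝ (Fin n → ℝ) = n := by
  rw [Module.finrank_pi, Fintype.card_fin]

lemma pot_nonneg {n : ℕ} (W : Submodule ℝ (Fin n → ℝ)) : 0 ≤ pot n W := by
  have : (1:ℝ) ≤ (1 + 1/(n:ℝ)) ^ (n - Module.finrank ℝ W) := by
    apply one_le_pow₀
    have : (0:ℝ) ≤ 1/(n:ℝ) := by positivity
    linarith
  simp only [pot]; linarith

theorem step_point {n s : ℕ} (hn : 1 ≤ n) (hs1 : 1 ≤ s) (W : Submodule ℝ (Fin n → ℝ)) :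
    ∑ v ∈ Aset n s, pot n (Submodule.span ℝ {colF v} ⊔ W) ≤
      (1 - 1/(4*(n:ℝ))) * #(Aset n s) * pot n W := by
  by_cases hW : W = ⊤
  · subst hW
    have h2 : pot n (⊤ : Submodule ℝ (Fin n → ℝ)) = 0 := by
      simp [pot, finrank_top, finrank_pi_fin]
    rw [h2, mul_zero]
    apply le_of_eq
    apply Finset.sum_eq_zero
    intro v _
    rw [sup_top_eq, h2]
  · set r := Module.finrank ℝ W with hr
    have hrn : r < n := by
      have := Submodule.finrank_lt (K := ℝ) (V := Fin n → ℝ) hW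
      rwa [finrank_pi_fin] at this
    obtain ⟨e, he⟩ : ∃ e, n - r = e + 1 := ⟨n - r - 1, by omega⟩
    set z := 1 + 1/(n:ℝ) with hz
    have hz1 : (1:ℝ) ≤ z := by
      have : (0:ℝ) ≤ 1/(n:ℝ) := by positivity
      simp only [hz]; linarith
    have hz0 : (0:ℝ) ≤ z := by linarith
    rw [← Finset.sum_filter_add_sum_filter_not (Aset n s) (fun v => colF v ∈ W)]
    have hin : ∀ v ∈ (Aset n s).filter (fun v => colF v ∈ W),
        pot n (Submodule.span ℝ {colF v} ⊔ W) = z ^ (e+1) - 1 := by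
      intro v hv
      have hvW : colF v ∈ W := (mem_filter.1 hv).2
      have hsup : Submodule.span ℝ {colF v} ⊔ W = W := by
        rw [sup_eq_right]
        exact Submodule.span_le.2 (Set.singleton_subset_iff.2 hvW)
      rw [hsup, pot, ← hr, he]
    have hout : ∀ v ∈ (Aset n s).filter (fun v => ¬ colF v ∈ W),
        pot n (Submodule.span ℝ {colF v} ⊔ W) = z ^ e - 1 := by
      intro v hv
      have hvW : colF v ∉ W := (mem_filter.1 hv).2
      have hv0 : colF v ≠ 0 := fun h => hvW (h ▸ W.zero_mem)
      have hlt : W < Submodule.span ℝ {colF v} ⊔ W := by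
        refine lt_of_le_of_ne le_sup_right (fun h => hvW ?_)
        rw [h]
        exact Submodule.mem_sup_left (Submodule.mem_span_singleton_self (colF v))
      have hle : Module.finrank ℝ ↥(Submodule.span ℝ {colF v} ⊔ W) ≤ 1 + r := by
        have h3 := Submodule.finrank_sup_add_finrank_inf_eq (Submodule.span ℝ {colF v}) W
        have h1 : Module.finrank ℝ ↥(Submodule.span ℝ {colF v}) = 1 := finrank_span_singleton hv0
        omega
      have hgt : r < Module.finrank ℝ ↥(Submodule.span ℝ {colF v} ⊔ W) :=
        Submodule.finrank_lt_finrank_of_lt hlt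
      have heq : Module.finrank ℝ ↥(Submodule.span ℝ {colF v} ⊔ W) = r + 1 := by omega
      rw [pot, heq]
      congr 2
      omega
    rw [Finset.sum_congr rfl hin, Finset.sum_congr rfl hout, Finset.sum_const, Finset.sum_const]
    set aw := #((Aset n s).filter (fun v => colF v ∈ W)) with haw
    set anw := #((Aset n s).filter (fun v => ¬ colF v ∈ W)) with hanw
    have hsum : aw + anw = #(Aset n s) := Finset.card_filter_add_card_filter_not _
    set A := (#(Aset n s) : ℝ) with hA
    have hA0 : (0:ℝ) ≤ A := by positivity
    have hanw' : (anw:ℝ) = A - aw := by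
      rw [hA, ← hsum]; push_cast; ring
    have hkc : (aw:ℝ) ≤ (1 - ((e:ℝ)+1)/(4*n)) * A := by
      have h5 := key_count hn hs1 W hW
      rw [← hr, he] at h5
      rw [hA]
      convert h5 using 3
      push_cast; ring
    have hpotW : pot n W = z ^ (e+1) - 1 := by rw [pot, ← hr, he]
    rw [hpotW, nsmul_eq_mul, nsmul_eq_mul]
    have hgeom := geom_aux hz1 e
    have h4n : (0:ℝ) < 4*n := by
      have : (1:ℝ) ≤ n := by exact_mod_cast hn
      linarith
    have hzz : (0:ℝ) ≤ z ^ e * (z - 1) := by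
      apply mul_nonneg (pow_nonneg hz0 e) (by linarith)
    have e2 : (aw:ℝ) * (z^e*(z-1)) ≤ ((1 - ((e:ℝ)+1)/(4*n))*A) * (z^e*(z-1)) :=
      mul_le_mul_of_nonneg_right hkc hzz
    have hfin : (0:ℝ) ≤ A * (1/(4*n)) * (((e:ℝ)+1) * z^e * (z-1) - (z^(e+1) - 1)) := by
      apply mul_nonneg (mul_nonneg hA0 (by positivity))
      linarith [hgeom]
    rw [hanw']
    simp only [pow_succ] at hfin ⊢
    have hid1 : (aw:ℝ)*(z^e*z - 1) + (A - aw)*(z^e - 1)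
        = aw*(z^e*(z-1)) + A*(z^e-1) := by ring
    have hid2 : (1 - 1/(4*(n:ℝ)))*A*(z^e*z-1)
        - ((1-((e:ℝ)+1)/(4*n))*A*(z^e*(z-1)) + A*(z^e-1))
        = A * (1/(4*n)) * (((e:ℝ)+1) * z^e * (z-1) - (z^e*z - 1)) := by ring
    linarith [e2, hfin, hid1, hid2]

lemma sum_update {m : ℕ} {κ : Type*} [DecidableEq κ] (t : Finset κ) (F : (Fin m → κ) → ℝ)
    (j : Fin m) :
    ∑ M ∈ Fintype.piFinset (fun _ : Fin m => t), ∑ v ∈ t, F (Function.update M j v)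
      = #t * ∑ M ∈ Fintype.piFinset (fun _ : Fin m => t), F M := by
  classical
  set pi := Fintype.piFinset (fun _ : Fin m => t) with hpi
  have hmapsto : ∀ M ∈ pi, M j ∈ t := by
    intro M hM
    exact (Fintype.mem_piFinset.1 hM) j
  have hfiber : ∀ v ∈ t, ∀ w ∈ t,
      ∑ M ∈ pi.filter (fun M => M j = w), F (Function.update M j v)
        = ∑ M ∈ pi.filter (fun M => M j = v), F M := by
    intro v hv w hw
    apply Finset.sum_nbij' (fun M => Function.update M j v) (fun M => Function.update M j w)
    · intro M hM
      simp only [mem_filter, hpi, Fintype.mem_piFinset] at hM ⊢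
      refine ⟨fun i => ?_, Function.update_self _ _ _⟩
      by_cases h : i = j
      · subst h; rw [Function.update_self]; exact hv
      · rw [Function.update_of_ne h]; exact hM.1 i
    · intro M hM
      simp only [mem_filter, hpi, Fintype.mem_piFinset] at hM ⊢
      refine ⟨fun i => ?_, Function.update_self _ _ _⟩
      by_cases h : i = j
      · subst h; rw [Function.update_self]; exact hw
      · rw [Function.update_of_ne h]; exact hM.1 i
    · intro M hM
      simp only [mem_filter] at hM
      funext i
      by_cases h : i = j
      · subst h; rw [Function.update_self, hM.2]
      · rw [Function.update_of_ne h, Function.update_of_ne h]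
    · intro M hM
      simp only [mem_filter] at hM
      funext i
      by_cases h : i = j
      · subst h; rw [Function.update_self, hM.2]
      · rw [Function.update_of_ne h, Function.update_of_ne h]
    · intro M hM
      rfl
  calc ∑ M ∈ pi, ∑ v ∈ t, F (Function.update M j v)
      = ∑ v ∈ t, ∑ M ∈ pi, F (Function.update M j v) := Finset.sum_comm
    _ = ∑ v ∈ t, ∑ w ∈ t, ∑ M ∈ pi.filter (fun M => M j = w), F (Function.update M j v) := by
        apply Finset.sum_congr rfl
        intro v hv
        rw [Finset.sum_fiberwise_of_maps_to hmapsto]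
    _ = ∑ v ∈ t, ∑ w ∈ t, ∑ M ∈ pi.filter (fun M => M j = v), F M := by
        apply Finset.sum_congr rfl
        intro v hv
        exact Finset.sum_congr rfl (fun w hw => hfiber v hv w hw)
    _ = ∑ v ∈ t, (#t : ℝ) * ∑ M ∈ pi.filter (fun M => M j = v), F M := by
        apply Finset.sum_congr rfl
        intro v hv
        rw [Finset.sum_const, nsmul_eq_mul]
    _ = #t * ∑ v ∈ t, ∑ M ∈ pi.filter (fun M => M j = v), F M := by
        rw [Finset.mul_sum]
    _ = #t * ∑ M ∈ pi, F M := by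
        rw [Finset.sum_fiberwise_of_maps_to hmapsto]

section
variable {n s m : ℕ}

def piA (n s m : ℕ) : Finset (Fin m → Fin n → Bool) := Fintype.piFinset (fun _ => Aset n s)

def spanT (M : Fin m → Fin n → Bool) (T : Finset (Fin m)) : Submodule ℝ (Fin n → ℝ) :=
  Submodule.span ℝ ((fun j => colF (M j)) '' ↑T)

lemma Aset_card_pos (n s : ℕ) : 0 < #(Aset n s) := by
  rw [Finset.card_pos]
  refine ⟨fun _ => false, ?_⟩
  rw [Aset, mem_filter]; simp [wt]

lemma spanT_insert (M : Fin m → Fin n → Bool) (T : Finset (Fin m)) (j : Fin m) :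
    spanT M (insert j T) = Submodule.span ℝ {colF (M j)} ⊔ spanT M T := by
  rw [spanT, coe_insert, Set.image_insert_eq, Submodule.span_insert, spanT]

lemma spanT_update (M : Fin m → Fin n → Bool) (T : Finset (Fin m)) (j : Fin m)
    (hj : j ∉ T) (v : Fin n → Bool) :
    spanT (Function.update M j v) T = spanT M T := by
  unfold spanT
  congr 1
  apply Set.image_congr
  intro a ha
  rw [Function.update_of_ne (by rintro rfl; exact hj ha)]

lemma phi_step (hn : 1 ≤ n) (hs1 : 1 ≤ s) (T : Finset (Fin m)) (j : Fin m) (hj : j ∉ T) :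
    ∑ M ∈ piA n s m, pot n (spanT M (insert j T)) ≤
      (1 - 1/(4*(n:ℝ))) * ∑ M ∈ piA n s m, pot n (spanT M T) := by
  simp only [piA]
  have ha : (0:ℝ) < #(Aset n s) := by exact_mod_cast Aset_card_pos n s
  have key := sum_update (Aset n s) (fun M => pot n (spanT M (insert j T))) j
  have hpoint : ∀ M ∈ Fintype.piFinset (fun _ : Fin m => Aset n s),
      ∑ v ∈ Aset n s, pot n (spanT (Function.update M j v) (insert j T))
        ≤ (1 - 1/(4*(n:ℝ))) * #(Aset n s) * pot n (spanT M T) := by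
    intro M _
    have heq : ∀ v ∈ Aset n s, pot n (spanT (Function.update M j v) (insert j T))
        = pot n (Submodule.span ℝ {colF v} ⊔ spanT M T) := by
      intro v _
      rw [spanT_insert, spanT_update _ _ _ hj, Function.update_self]
    rw [Finset.sum_congr rfl heq]
    exact step_point hn hs1 (spanT M T)
  have h1 : ∑ M ∈ Fintype.piFinset (fun _ : Fin m => Aset n s),
        ∑ v ∈ Aset n s, pot n (spanT (Function.update M j v) (insert j T))
      ≤ (1 - 1/(4*(n:ℝ))) * #(Aset n s) *
          ∑ M ∈ Fintype.piFinset (fun _ : Fin m => Aset n s), pot n (spanT M T) := by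
    calc _ ≤ ∑ M ∈ Fintype.piFinset (fun _ : Fin m => Aset n s),
          (1 - 1/(4*(n:ℝ))) * #(Aset n s) * pot n (spanT M T) := Finset.sum_le_sum hpoint
      _ = _ := by rw [← Finset.mul_sum]
  rw [key] at h1
  rw [show (1 - 1/(4*(n:ℝ))) * (#(Aset n s):ℝ) *
        (∑ M ∈ Fintype.piFinset (fun _ : Fin m => Aset n s), pot n (spanT M T))
      = (#(Aset n s):ℝ) * ((1 - 1/(4*(n:ℝ))) *
        ∑ M ∈ Fintype.piFinset (fun _ : Fin m => Aset n s), pot n (spanT M T)) from by ring] at h1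
  exact le_of_mul_le_mul_left h1 ha

lemma phi_bound (hn : 1 ≤ n) (hs1 : 1 ≤ s) (T : Finset (Fin m)) :
    ∑ M ∈ piA n s m, pot n (spanT M T) ≤
      (1 - 1/(4*(n:ℝ)))^(#T) * (((1 + 1/(n:ℝ))^n - 1) * (#(Aset n s):ℝ)^m) := by
  induction T using Finset.induction_on with
  | empty =>
    have hbot : ∀ M : Fin m → Fin n → Bool, spanT M (∅ : Finset (Fin m)) = ⊥ := by
      intro M
      rw [spanT]
      simp [Submodule.span_empty]
    have hpotbot : pot n (⊥ : Submodule ℝ (Fin n → ℝ)) = (1 + 1/(n:ℝ))^n - 1 := by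
      rw [pot, finrank_bot]
      norm_num
    have : ∑ M ∈ piA n s m, pot n (spanT M (∅ : Finset (Fin m)))
        = (#(piA n s m) : ℝ) * ((1 + 1/(n:ℝ))^n - 1) := by
      rw [Finset.sum_congr rfl (fun M _ => by rw [hbot M, hpotbot])]
      rw [Finset.sum_const, nsmul_eq_mul]
    rw [this, Finset.card_empty, pow_zero, one_mul]
    have hcard : #(piA n s m) = #(Aset n s) ^ m := by
      rw [piA, Fintype.card_piFinset]
      simp
    rw [hcard]
    push_cast
    apply le_of_eq
    ring
  | @insert j T' hj ih =>
    have h1 := phi_step (s := s) hn hs1 T' j hj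
    have hfac : (0:ℝ) ≤ 1 - 1/(4*(n:ℝ)) := by
      have hn' : (1:ℝ) ≤ n := by exact_mod_cast hn
      have : 1/(4*(n:ℝ)) ≤ 1 := by
        rw [div_le_one (by linarith)]
        linarith
      linarith
    calc ∑ M ∈ piA n s m, pot n (spanT M (insert j T'))
        ≤ (1 - 1/(4*(n:ℝ))) * ∑ M ∈ piA n s m, pot n (spanT M T') := h1
      _ ≤ (1 - 1/(4*(n:ℝ))) * ((1 - 1/(4*(n:ℝ)))^(#T') *
            (((1 + 1/(n:ℝ))^n - 1) * (#(Aset n s):ℝ)^m)) := by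
          exact mul_le_mul_of_nonneg_left ih hfac
      _ = (1 - 1/(4*(n:ℝ)))^(#(insert j T')) *
            (((1 + 1/(n:ℝ))^n - 1) * (#(Aset n s):ℝ)^m) := by
          rw [Finset.card_insert_of_notMem hj, pow_succ]
          ring

lemma bad_le (hn : 1 ≤ n) (hs1 : 1 ≤ s) (S : Finset (Fin m)) :
    (#((piA n s m).filter (fun M => spanT M S ≠ ⊤)) : ℝ) ≤
      (n:ℝ) * ((1 - 1/(4*(n:ℝ)))^(#S) * (((1 + 1/(n:ℝ))^n - 1) * (#(Aset n s):ℝ)^m)) := by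
  have hz1 : (1:ℝ) ≤ 1 + 1/(n:ℝ) := by
    have : (0:ℝ) ≤ 1/(n:ℝ) := by positivity
    linarith
  have hn0 : (0:ℝ) < n := by exact_mod_cast hn
  have hpot : ∀ M ∈ (piA n s m).filter (fun M => spanT M S ≠ ⊤),
      1/(n:ℝ) ≤ pot n (spanT M S) := by
    intro M hM
    have hMne : spanT M S ≠ ⊤ := (mem_filter.1 hM).2
    have hrlt : Module.finrank ℝ (spanT M S) < n := by
      have := Submodule.finrank_lt (K := ℝ) (V := Fin n → ℝ) hMne
      rwa [finrank_pi_fin] at this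
    have h1 : (1 + 1/(n:ℝ))^1 ≤ (1 + 1/(n:ℝ))^(n - Module.finrank ℝ (spanT M S)) :=
      pow_le_pow_right₀ hz1 (by omega)
    rw [pot]
    rw [pow_one] at h1
    linarith
  have hsub : ∑ M ∈ (piA n s m).filter (fun M => spanT M S ≠ ⊤), pot n (spanT M S)
      ≤ ∑ M ∈ piA n s m, pot n (spanT M S) :=
    Finset.sum_le_sum_of_subset_of_nonneg (Finset.filter_subset _ _)
      (fun M _ _ => pot_nonneg _)
  have hcnt : (#((piA n s m).filter (fun M => spanT M S ≠ ⊤)) : ℝ) * (1/(n:ℝ))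
      ≤ ∑ M ∈ (piA n s m).filter (fun M => spanT M S ≠ ⊤), pot n (spanT M S) := by
    calc (#((piA n s m).filter (fun M => spanT M S ≠ ⊤)) : ℝ) * (1/(n:ℝ))
        = ∑ _M ∈ (piA n s m).filter (fun M => spanT M S ≠ ⊤), 1/(n:ℝ) := by
          rw [Finset.sum_const, nsmul_eq_mul]
      _ ≤ _ := Finset.sum_le_sum hpot
  have hphi := phi_bound (m := m) hn hs1 S
  have hfin := le_trans hcnt (le_trans hsub hphi)
  calc (#((piA n s m).filter (fun M => spanT M S ≠ ⊤)) : ℝ)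
      = ((#((piA n s m).filter (fun M => spanT M S ≠ ⊤)) : ℝ) * (1/(n:ℝ))) * n := by
        field_simp
    _ ≤ ((1 - 1/(4*(n:ℝ)))^(#S) * (((1 + 1/(n:ℝ))^n - 1) * (#(Aset n s):ℝ)^m)) * n := by
        apply mul_le_mul_of_nonneg_right hfin (le_of_lt hn0)
    _ = _ := by ring
end

-- numeric A : N ≤ m
lemma numA {n N : ℕ} (hn : 1000000 ≤ n) (hN : N = ⌈(10 : ℝ) * n * Real.log n⌉₊) :
    N ≤ n ^ 2 := by
  have hn1 : (1:ℝ) ≤ n := by exact_mod_cast le_trans (by norm_num) hn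
  have hnR : (1000000:ℝ) ≤ n := by exact_mod_cast hn
  have hn0 : (0:ℝ) < n := by linarith
  have hlog0 : 0 ≤ Real.log n := Real.log_nonneg hn1
  have hx0 : (0:ℝ) ≤ 10 * n * Real.log n := by positivity
  have hceil : (N:ℝ) < 10 * n * Real.log n + 1 := by
    rw [hN]; exact Nat.ceil_lt_add_one hx0
  have hsqrt0 : (0:ℝ) < Real.sqrt n := Real.sqrt_pos.2 hn0
  have hlogsqrt : Real.log n = 2 * Real.log (Real.sqrt n) := by
    rw [Real.log_sqrt (le_of_lt hn0)]; ring
  have hlog_le : Real.log (Real.sqrt n) ≤ Real.sqrt n := by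
    have := Real.log_le_sub_one_of_pos hsqrt0
    linarith
  have hsqrt_le : Real.sqrt n ≤ (n:ℝ)/1000 := by
    have h1 : (n:ℝ) ≤ ((n:ℝ)/1000)^2 := by
      rw [div_pow]
      rw [le_div_iff₀ (by norm_num)]
      nlinarith
    calc Real.sqrt n ≤ Real.sqrt (((n:ℝ)/1000)^2) := Real.sqrt_le_sqrt h1
      _ = (n:ℝ)/1000 := Real.sqrt_sq (by positivity)
  have hlogn_le : Real.log n ≤ 2 * ((n:ℝ)/1000) := by
    rw [hlogsqrt]
    have := le_trans hlog_le hsqrt_le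
    linarith
  have hfinal : 10 * (n:ℝ) * Real.log n + 1 ≤ (n:ℝ)^2 := by
    have h2 : 10 * (n:ℝ) * Real.log n ≤ 10 * n * (2 * (n/1000)) := by
      apply mul_le_mul_of_nonneg_left hlogn_le (by positivity)
    have h3 : 10 * (n:ℝ) * (2 * (n/1000)) = (n:ℝ)^2/50 := by ring
    nlinarith
  have : (N:ℝ) < (n:ℝ)^2 := lt_of_lt_of_le hceil hfinal
  have : (N:ℝ) ≤ ((n^2 : ℕ):ℝ) := by push_cast; linarith
  exact_mod_cast this

-- numeric B : scalar bound
lemma numB {n N : ℕ} (hn : 1000000 ≤ n) (hN : N = ⌈(10 : ℝ) * n * Real.log n⌉₊) :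
    (n:ℝ) * ((1 - 1/(4*(n:ℝ)))^N * ((1 + 1/(n:ℝ))^n - 1)) ≤ 81/100 := by
  have hn1 : (1:ℝ) ≤ n := by exact_mod_cast le_trans (by norm_num) hn
  have hnR : (1000000:ℝ) ≤ n := by exact_mod_cast hn
  have hn0 : (0:ℝ) < n := by linarith
  have hlog0 : 0 ≤ Real.log n := Real.log_nonneg hn1
  have hNge : 10 * (n:ℝ) * Real.log n ≤ N := hN ▸ Nat.le_ceil _
  have h4n0 : (0:ℝ) < 4*n := by linarith
  have hfac0 : (0:ℝ) ≤ 1 - 1/(4*(n:ℝ)) := by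
    have : 1/(4*(n:ℝ)) ≤ 1 := by rw [div_le_one h4n0]; linarith
    linarith
  -- (1 - 1/4n)^N ≤ exp(-N/(4n))
  have h1 : 1 - 1/(4*(n:ℝ)) ≤ Real.exp (-(1/(4*n))) := by
    have := Real.add_one_le_exp (-(1/(4*(n:ℝ))))
    linarith
  have h2 : (1 - 1/(4*(n:ℝ)))^N ≤ Real.exp (-(1/(4*n)))^N :=
    pow_le_pow_left₀ hfac0 h1 N
  have h3 : Real.exp (-(1/(4*(n:ℝ))))^N = Real.exp (-(N/(4*n))) := by
    rw [← Real.exp_nat_mul]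
    congr 1
    field_simp
  have h4 : Real.exp (-((N:ℝ)/(4*n))) ≤ Real.exp (-(2*Real.log n)) := by
    apply Real.exp_le_exp.2
    have h5 : 2*Real.log n ≤ (N:ℝ)/(4*n) := by
      rw [le_div_iff₀ h4n0]
      nlinarith
    linarith
  have h6 : Real.exp (-(2*Real.log n)) = ((n:ℝ)^2)⁻¹ := by
    rw [Real.exp_neg]
    congr 1
    rw [show (2:ℝ)*Real.log n = ((2:ℕ):ℝ)*Real.log n by norm_num, Real.exp_nat_mul,
      Real.exp_log hn0]
  -- (1+1/n)^n ≤ 3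
  have h7 : (1 + 1/(n:ℝ))^n ≤ 3 := by
    have ha : (1 + 1/(n:ℝ)) ≤ Real.exp (1/n) := by
      have := Real.add_one_le_exp (1/(n:ℝ))
      linarith
    have hb : (1 + 1/(n:ℝ))^n ≤ Real.exp (1/(n:ℝ))^n :=
      pow_le_pow_left₀ (by positivity) ha n
    have hc : Real.exp (1/(n:ℝ))^n = Real.exp 1 := by
      rw [← Real.exp_nat_mul]
      congr 1
      field_simp
    rw [hc] at hb
    have := Real.exp_one_lt_d9
    linarith
  have h8 : (1 - 1/(4*(n:ℝ)))^N ≤ ((n:ℝ)^2)⁻¹ := by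
    calc (1 - 1/(4*(n:ℝ)))^N ≤ Real.exp (-(1/(4*n)))^N := h2
      _ = Real.exp (-(N/(4*n))) := h3
      _ ≤ Real.exp (-(2*Real.log n)) := h4
      _ = ((n:ℝ)^2)⁻¹ := h6
  have hpow0 : (0:ℝ) ≤ (1 - 1/(4*(n:ℝ)))^N := pow_nonneg hfac0 N
  have h9 : (0:ℝ) ≤ (1 + 1/(n:ℝ))^n - 1 := by
    have : (1:ℝ) ≤ (1 + 1/(n:ℝ))^n :=
      one_le_pow₀ (by
        have h : (0:ℝ) ≤ 1/(n:ℝ) := by positivity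
        linarith)
    linarith
  calc (n:ℝ) * ((1 - 1/(4*(n:ℝ)))^N * ((1 + 1/(n:ℝ))^n - 1))
      ≤ (n:ℝ) * (((n:ℝ)^2)⁻¹ * 2) := by
        apply mul_le_mul_of_nonneg_left _ (le_of_lt hn0)
        apply mul_le_mul h8 (by linarith) h9 (by positivity)
    _ = 2/(n:ℝ) := by field_simp
    _ ≤ 81/100 := by
        rw [div_le_div_iff₀ hn0 (by norm_num)]
        linarith

end
end Stmt17Aux

open Stmt17Aux
open scoped Classical

/-- Full rank lemma. There is `n₀` such that for all `n ≥ n₀`, `1 ≤ s ≤ n`, with `m = n²`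
and `N = ⌈10 n ln n⌉`: if `M` is a uniformly random `n×m` matrix whose columns are
independent uniform elements of the set of `{0,1}`-vectors of Hamming weight at most `s`
(viewed in `ℝ^n`), then with probability at least `1/10` over `M`, a uniformly random
`N`-element subset `S ⊆ [m]` has its indexed columns spanning `ℝ^n` with probability at
least `1/10`. Probabilities over these uniform distributions are expressed by counting:
`Pr_M[·] ≥ 1/10` becomes `count(good M) ≥ (1/10)·count(all M)` and
`Pr_S[·] ≥ 1/10` becomes `count(good S) ≥ (1/10)·C(m,N)`. -/
theorem stmt_17 :
    ∃ n₀ : ℕ, ∀ n : ℕ, n₀ ≤ n → ∀ s : ℕ, 1 ≤ s → s ≤ n →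
      ∀ m N : ℕ, m = n ^ 2 → N = ⌈(10 : ℝ) * n * Real.log n⌉₊ →
        (1 : ℝ) / 10 *
            (({M : Fin m → Fin n → Bool | ∀ j, {i | M j i = true}.ncard ≤ s}.ncard : ℝ)) ≤
          (({M : Fin m → Fin n → Bool |
              (∀ j, {i | M j i = true}.ncard ≤ s) ∧
              (1 : ℝ) / 10 * (m.choose N : ℝ) ≤
                (({S : Finset (Fin m) | S.card = N ∧
                    Submodule.span ℝ
                      ((fun j : Fin m => fun i : Fin n => if M j i then (1 : ℝ) else 0) '' ↑S) =
                      ⊤}.ncard : ℝ))}.ncard : ℝ)) := by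
  use 1000000
  intro n hn s hs1 hsn m N hm hN
  have hn1 : 1 ≤ n := le_trans (by norm_num) hn
  set pc : Finset (Finset (Fin m)) := powersetCard N (univ : Finset (Fin m)) with hpc
  have hCpc : #pc = m.choose N := by
    rw [hpc, card_powersetCard, card_univ, Fintype.card_fin]
  have hNm : N ≤ m := by rw [hm]; exact numA hn hN
  have hC0 : 0 < m.choose N := Nat.choose_pos hNm
  have hC0' : (0:ℝ) < (m.choose N : ℝ) := by exact_mod_cast hC0
  -- membership conversion
  have hwt : ∀ (b : Fin n → Bool), {i | b i = true}.ncard = wt b := by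
    intro b
    rw [Set.ncard_eq_toFinset_card', Set.toFinset_setOf]
    rfl
  have hMmem : ∀ M : Fin m → Fin n → Bool,
      (∀ j, {i | M j i = true}.ncard ≤ s) ↔ M ∈ piA n s m := by
    intro M
    simp only [piA, Fintype.mem_piFinset, Aset, mem_filter, mem_univ, true_and]
    constructor
    · intro h j; rw [← hwt]; exact h j
    · intro h j; rw [hwt]; exact h j
  have hMset : {M : Fin m → Fin n → Bool | ∀ j, {i | M j i = true}.ncard ≤ s}
      = ↑(piA n s m) := by
    ext M
    simp only [Set.mem_setOf_eq, Finset.mem_coe]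
    exact hMmem M
  have hSset : ∀ M : Fin m → Fin n → Bool,
      ({S : Finset (Fin m) | S.card = N ∧ Submodule.span ℝ
          ((fun j : Fin m => fun i : Fin n => if M j i then (1:ℝ) else 0) '' ↑S) = ⊤}.ncard)
        = #(pc.filter (fun S => spanT M S = ⊤)) := by
    intro M
    rw [Set.ncard_eq_toFinset_card', Set.toFinset_setOf]
    congr 1
    ext S
    simp only [mem_filter, mem_univ, true_and, hpc, mem_powersetCard_univ]
    unfold spanT colF
    tauto
  set P : (Fin m → Fin n → Bool) → Prop := fun M =>
    (1 : ℝ) / 10 * (m.choose N : ℝ) ≤ (#(pc.filter (fun S => spanT M S = ⊤)) : ℝ) with hP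
  have hGset : {M : Fin m → Fin n → Bool |
      (∀ j, {i | M j i = true}.ncard ≤ s) ∧
      (1 : ℝ) / 10 * (m.choose N : ℝ) ≤
        (({S : Finset (Fin m) | S.card = N ∧ Submodule.span ℝ
            ((fun j : Fin m => fun i : Fin n => if M j i then (1 : ℝ) else 0) '' ↑S) =
            ⊤}.ncard : ℝ))} = ↑((piA n s m).filter P) := by
    ext M
    simp only [Set.mem_setOf_eq, Finset.mem_coe, mem_filter]
    rw [hSset M, hP]
    exact and_congr_left (fun _ => hMmem M)
  rw [hMset, hGset, Set.ncard_coe_finset, Set.ncard_coe_finset]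
  -- counting
  set a := #(Aset n s) with ha
  have hpiAcard : #(piA n s m) = a ^ m := by
    rw [piA, Fintype.card_piFinset]
    simp [ha]
  set A := (a:ℝ) with hA
  have hA0 : (0:ℝ) ≤ A := by positivity
  have hApow0 : (0:ℝ) ≤ A ^ m := by positivity
  -- swap double count
  have hswap : ∑ M ∈ piA n s m, #(pc.filter (fun S => spanT M S ≠ ⊤))
      = ∑ S ∈ pc, #((piA n s m).filter (fun M => spanT M S ≠ ⊤)) := by
    simp only [Finset.card_filter]
    rw [Finset.sum_comm]
  -- per-S bound
  have hperS : ∀ S ∈ pc, (#((piA n s m).filter (fun M => spanT M S ≠ ⊤)) : ℝ)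
      ≤ (81/100) * A ^ m := by
    intro S hS
    have hcardS : #S = N := by
      rw [hpc] at hS
      exact mem_powersetCard_univ.1 hS
    have h := bad_le (n := n) (s := s) (m := m) hn1 hs1 S
    rw [hcardS] at h
    have hnum := numB hn hN
    calc (#((piA n s m).filter (fun M => spanT M S ≠ ⊤)) : ℝ)
        ≤ (n:ℝ) * ((1 - 1/(4*(n:ℝ)))^N * (((1 + 1/(n:ℝ))^n - 1) * A ^ m)) := h
      _ = ((n:ℝ) * ((1 - 1/(4*(n:ℝ)))^N * ((1 + 1/(n:ℝ))^n - 1))) * A ^ m := by ring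
      _ ≤ (81/100) * A ^ m := mul_le_mul_of_nonneg_right hnum hApow0
  have hsum_bad : (∑ M ∈ piA n s m, (#(pc.filter (fun S => spanT M S ≠ ⊤)) : ℝ))
      ≤ (m.choose N : ℝ) * ((81/100) * A ^ m) := by
    have h1 : (∑ M ∈ piA n s m, (#(pc.filter (fun S => spanT M S ≠ ⊤)) : ℝ))
        = ∑ S ∈ pc, (#((piA n s m).filter (fun M => spanT M S ≠ ⊤)) : ℝ) := by
      exact_mod_cast congrArg (Nat.cast : ℕ → ℝ) hswap
    rw [h1]
    calc ∑ S ∈ pc, (#((piA n s m).filter (fun M => spanT M S ≠ ⊤)) : ℝ)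
        ≤ ∑ _S ∈ pc, (81/100) * A ^ m := Finset.sum_le_sum hperS
      _ = (#pc : ℝ) * ((81/100) * A ^ m) := by rw [Finset.sum_const, nsmul_eq_mul]
      _ = (m.choose N : ℝ) * ((81/100) * A ^ m) := by rw [hCpc]
  -- Markov
  set Bad := (piA n s m).filter (fun M => ¬ P M) with hBad
  have hBadlb : ∀ M ∈ Bad, (9/10) * (m.choose N : ℝ)
      ≤ (#(pc.filter (fun S => spanT M S ≠ ⊤)) : ℝ) := by
    intro M hM
    have hMP : ¬ P M := (mem_filter.1 hM).2
    rw [hP] at hMP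
    push_neg at hMP
    have hpart : #(pc.filter (fun S => spanT M S = ⊤))
        + #(pc.filter (fun S => ¬ spanT M S = ⊤)) = #pc :=
      Finset.card_filter_add_card_filter_not _
    have hpart' : (#(pc.filter (fun S => spanT M S = ⊤)) : ℝ)
        + (#(pc.filter (fun S => spanT M S ≠ ⊤)) : ℝ) = (m.choose N : ℝ) := by
      rw [← hCpc]
      exact_mod_cast hpart
    linarith
  have hbad_nonneg : ∀ M ∈ piA n s m,
      (0:ℝ) ≤ (#(pc.filter (fun S => spanT M S ≠ ⊤)) : ℝ) := fun M _ => by positivity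
  have hmarkov : (9/10) * (m.choose N : ℝ) * (#Bad : ℝ)
      ≤ ∑ M ∈ piA n s m, (#(pc.filter (fun S => spanT M S ≠ ⊤)) : ℝ) := by
    calc (9/10) * (m.choose N : ℝ) * (#Bad : ℝ)
        = ∑ _M ∈ Bad, (9/10) * (m.choose N : ℝ) := by
          rw [Finset.sum_const, nsmul_eq_mul]; ring
      _ ≤ ∑ M ∈ Bad, (#(pc.filter (fun S => spanT M S ≠ ⊤)) : ℝ) :=
          Finset.sum_le_sum hBadlb
      _ ≤ ∑ M ∈ piA n s m, (#(pc.filter (fun S => spanT M S ≠ ⊤)) : ℝ) :=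
          Finset.sum_le_sum_of_subset_of_nonneg (Finset.filter_subset _ _)
            (fun M hM _ => by positivity)
  have hBadle : (#Bad : ℝ) ≤ (9/10) * A ^ m := by
    have h2 : (9/10) * (m.choose N : ℝ) * (#Bad : ℝ)
        ≤ (m.choose N : ℝ) * ((81/100) * A ^ m) := le_trans hmarkov hsum_bad
    nlinarith [hC0']
  have hpartM : #((piA n s m).filter P) + #Bad = #(piA n s m) :=
    Finset.card_filter_add_card_filter_not _
  have hgoal : (1:ℝ)/10 * (#(piA n s m) : ℝ) ≤ (#((piA n s m).filter P) : ℝ) := by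
    have h3 : (#((piA n s m).filter P) : ℝ) + (#Bad : ℝ) = (#(piA n s m) : ℝ) := by
      exact_mod_cast hpartM
    have h4 : (#(piA n s m) : ℝ) = A ^ m := by
      rw [hpiAcard]; push_cast [hA]; ring
    rw [h4] at h3 ⊢
    linarith
  exact hgoal
end

section
/- Let n ≥ 3, let M be an n×m matrix over the field F₂ with two elements, and let d be a natural number with 2n < d. Suppose that for every nonzero vector c ∈ F₂^n, the vector Mᵀc ∈ F₂^m has Hamming weight greater than d. Let N = n·⌈m/d⌉. Then N < m, and the number of subsets S ⊆ {1,…,m} with |S| = N such that M[S] has full rank is at least C(m, N)/2. -/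
/-! A set `S` of columns of `M` fails to span exactly when some nonzero `c` is orthogonal to all
of them, i.e. when `S` lies in the zero set of `Mᵀc`, which has fewer than `m - d` elements.
A union bound over the `2ⁿ` vectors `c` leaves at most `2ⁿ·C(m-d-1, N)` non-spanning `N`-sets,
and `C(m-d-1, N)/C(m, N) ≤ (1 - (d+1)/m)^(n⌈m/d⌉) ≤ e⁻ⁿ`. Since `(2/e)ⁿ ≤ 1/2` for `n ≥ 3`, at
least half of the `N`-sets span. -/

open Matrix Finset Real

theorem exists_ne_zero_dotProduct_eq_zero_of_span_ne_top {K ι : Type*} [Field K] [Fintype ι]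
    {s : Set (ι → K)} (hs : Submodule.span K s ≠ ⊤) : ∃ c ≠ 0, ∀ v ∈ s, c ⬝ᵥ v = 0 := by
  classical
  obtain ⟨f, hf0, hf⟩ := (Submodule.span K s).exists_le_ker_of_lt_top hs.lt_top
  refine ⟨(dotProductEquiv K ι).symm f, by simpa using hf0, fun v hv => ?_⟩
  have hfv : f v = 0 := hf (Submodule.subset_span hv)
  simpa [← dotProductEquiv_apply_apply] using hfv

theorem exists_ne_zero_mulVec_transpose_eq_zero_of_span_ne_top {K ι κ : Type*} [Field K]
    [Fintype ι] {M : Matrix ι κ K} {S : Set κ}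
    (hS : Submodule.span K ((fun j r => M r j) '' S) ≠ ⊤) :
    ∃ c ≠ 0, ∀ j ∈ S, (Mᵀ *ᵥ c) j = 0 := by
  obtain ⟨c, hc0, hc⟩ := exists_ne_zero_dotProduct_eq_zero_of_span_ne_top hS
  refine ⟨c, hc0, fun j hj => ?_⟩
  rw [mulVec, dotProduct_comm]
  exact hc _ ⟨j, hj, rfl⟩

theorem card_filter_span_ne_top_le {K ι κ : Type*} [Field K] [Fintype K] [DecidableEq K]
    [Fintype ι] [DecidableEq ι] [Fintype κ] [DecidableEq κ] (M : Matrix ι κ K) (N a : ℕ)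
    (hM : ∀ c ≠ 0, #{j | (Mᵀ *ᵥ c) j = 0} ≤ a) :
    #((powersetCard N univ).filter fun S : Finset κ =>
        Submodule.span K ((fun j r => M r j) '' ↑S) ≠ ⊤) ≤
      Fintype.card K ^ Fintype.card ι * a.choose N := by
  calc _ ≤ #(({c | c ≠ 0} : Finset (ι → K)).biUnion
          fun c => powersetCard N {j | (Mᵀ *ᵥ c) j = 0}) := by
        refine card_le_card fun S hS => ?_
        obtain ⟨hS, hspan⟩ := mem_filter.mp hS
        obtain ⟨c, hc0, hc⟩ := exists_ne_zero_mulVec_transpose_eq_zero_of_span_ne_top hspan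
        simp only [mem_biUnion, mem_filter_univ, mem_powersetCard] at hS ⊢
        exact ⟨c, hc0, fun j hj => by simpa using hc j hj, hS.2⟩
    _ ≤ #({c | c ≠ 0} : Finset (ι → K)) * a.choose N := by
        refine card_biUnion_le_card_mul _ _ _ fun c hc => ?_
        rw [card_powersetCard]
        exact Nat.choose_le_choose N (hM c (by simpa using hc))
    _ ≤ Fintype.card K ^ Fintype.card ι * a.choose N := by
        gcongr
        exact (card_filter_le _ _).trans (by simp)

theorem Nat.choose_mul_pow_le_choose_mul_pow {a b : ℕ} (N : ℕ) (hab : a ≤ b) :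
    a.choose N * b ^ N ≤ b.choose N * a ^ N := by
  have hdesc : a.descFactorial N * b ^ N ≤ b.descFactorial N * a ^ N := by
    rw [Nat.descFactorial_eq_prod_range, Nat.descFactorial_eq_prod_range, pow_eq_prod_const,
      pow_eq_prod_const, ← prod_mul_distrib, ← prod_mul_distrib]
    refine prod_le_prod' fun i _ => ?_
    rw [Nat.sub_mul, Nat.sub_mul, Nat.mul_comm a b]
    exact Nat.sub_le_sub_left (Nat.mul_le_mul_left i hab) _
  rw [Nat.descFactorial_eq_factorial_mul_choose, Nat.descFactorial_eq_factorial_mul_choose,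
    mul_assoc, mul_assoc] at hdesc
  exact Nat.le_of_mul_le_mul_left hdesc N.factorial_pos

theorem one_sub_pow_le_exp_neg_one {x : ℝ} {k : ℕ} (hx : x ≤ 1) (hkx : 1 ≤ k * x) :
    (1 - x) ^ k ≤ exp (-1) :=
  calc (1 - x) ^ k ≤ exp (-x) ^ k :=
        pow_le_pow_left₀ (by linarith) (by linarith [add_one_le_exp (-x)]) k
    _ = exp (-(k * x)) := by rw [← exp_nat_mul]; ring_nf
    _ ≤ exp (-1) := exp_le_exp.mpr (by linarith)

theorem two_mul_exp_neg_one_pow_le_half {n : ℕ} (hn : 3 ≤ n) : (2 * exp (-1)) ^ n ≤ 1 / 2 := by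
  have hlt : 2 * exp (-1) ≤ 0.736 := by linarith [exp_neg_one_lt_d9]
  calc (2 * exp (-1)) ^ n ≤ 0.736 ^ n := pow_le_pow_left₀ (by positivity) hlt n
    _ ≤ 0.736 ^ 3 := pow_le_pow_of_le_one (by norm_num) (by norm_num) hn
    _ ≤ 1 / 2 := by norm_num

theorem le_natCeil_div_mul (m : ℕ) {d : ℕ} (hd : 0 < d) : m ≤ ⌈(m : ℝ) / d⌉₊ * d := by
  have h := Nat.le_ceil ((m : ℝ) / d)
  rw [div_le_iff₀ (by positivity)] at h
  exact_mod_cast h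

theorem natCeil_div_mul_lt_add (m : ℕ) {d : ℕ} (hd : 0 < d) : ⌈(m : ℝ) / d⌉₊ * d < m + d := by
  have h := Nat.ceil_lt_add_one (by positivity : (0 : ℝ) ≤ m / d)
  have hd' : (0 : ℝ) < d := by positivity
  have : (⌈(m : ℝ) / d⌉₊ : ℝ) * d < m + d := by
    calc (⌈(m : ℝ) / d⌉₊ : ℝ) * d < (m / d + 1) * d := by gcongr
      _ = m + d := by field_simp
  exact_mod_cast this

theorem mul_natCeil_div_lt {n m d : ℕ} (hd : 2 * n < d) (hdm : d < m) :
    n * ⌈(m : ℝ) / d⌉₊ < m := by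
  have hk := natCeil_div_mul_lt_add m (by omega : 0 < d)
  refine Nat.lt_of_mul_lt_mul_right (a := d) ?_
  calc n * ⌈(m : ℝ) / d⌉₊ * d ≤ n * (m + d) := by rw [mul_assoc]; gcongr
    _ < m * d := by nlinarith

theorem two_pow_mul_choose_sub_le_half {n m d k : ℕ} (hn : 3 ≤ n) (hdm : d < m)
    (hk : m ≤ k * d) :
    (2 : ℝ) ^ n * (m - (d + 1)).choose (n * k) ≤ m.choose (n * k) / 2 := by
  set N := n * k
  set x : ℝ := (d + 1) / m
  have hm : (0 : ℝ) < m := by exact_mod_cast (Nat.zero_le d).trans_lt hdm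
  have hsub : ((m - (d + 1) : ℕ) : ℝ) = m * (1 - x) := by
    rw [Nat.cast_sub (by omega)]; push_cast; simp only [x]; field_simp
  have hx : x ≤ 1 := (div_le_one hm).mpr (by exact_mod_cast hdm)
  have hkx : 1 ≤ k * x := by
    rw [mul_div_assoc', le_div_iff₀ hm]
    have : (m : ℝ) ≤ k * d := by exact_mod_cast hk
    nlinarith
  have hchoose : ((m - (d + 1)).choose N : ℝ) * m ^ N ≤ m.choose N * (m * (1 - x)) ^ N := by
    rw [← hsub]; exact_mod_cast Nat.choose_mul_pow_le_choose_mul_pow N (Nat.sub_le m (d + 1))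
  have hratio : ((m - (d + 1)).choose N : ℝ) ≤ m.choose N * exp (-1) ^ n := by
    rw [mul_pow, ← mul_assoc, mul_right_comm, mul_le_mul_iff_left₀ (by positivity)] at hchoose
    refine hchoose.trans (mul_le_mul_of_nonneg_left ?_ (by positivity))
    rw [pow_mul']
    exact pow_le_pow_left₀ (pow_nonneg (by linarith) k) (one_sub_pow_le_exp_neg_one hx hkx) n
  calc (2 : ℝ) ^ n * (m - (d + 1)).choose N ≤ 2 ^ n * (m.choose N * exp (-1) ^ n) := by gcongr
    _ = m.choose N * (2 * exp (-1)) ^ n := by ring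
    _ ≤ m.choose N * (1 / 2) := by gcongr; exact two_mul_exp_neg_one_pow_le_half hn
    _ = m.choose N / 2 := by ring

theorem ncard_card_eq_and_add_card_filter_not {α : Type*} [Fintype α] [DecidableEq α] (N : ℕ)
    (p : Finset α → Prop) [DecidablePred p] :
    {S : Finset α | S.card = N ∧ p S}.ncard + #((powersetCard N univ).filter fun S => ¬p S) =
      (Fintype.card α).choose N := by
  have hset : {S : Finset α | S.card = N ∧ p S} = ↑((powersetCard N univ).filter p) := by
    ext S; simp
  rw [hset, Set.ncard_coe_finset, card_filter_add_card_filter_not, card_powersetCard, card_univ]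

/-- Let `n ≥ 3`, `M` an `n×m` matrix over `F₂`, and `d` with `2n < d` such that every
nonzero `c ∈ F₂^n` gives `Mᵀc` of Hamming weight greater than `d`. With `N = n·⌈m/d⌉`,
we have `N < m` and the number of `N`-element subsets `S ⊆ [m]` whose indexed columns span
`F₂^n` is at least `C(m, N)/2`. -/
theorem stmt_18 (n m d : ℕ) (hn : 3 ≤ n) (hd : 2 * n < d)
    (M : Matrix (Fin n) (Fin m) (ZMod 2))
    (h : ∀ c : Fin n → ZMod 2, c ≠ 0 →
      d < (Finset.univ.filter fun j => Mᵀ.mulVec c j ≠ 0).card) :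
    n * ⌈(m : ℝ) / d⌉₊ < m ∧
      (m.choose (n * ⌈(m : ℝ) / d⌉₊) : ℝ) / 2 ≤
        ({S : Finset (Fin m) | S.card = n * ⌈(m : ℝ) / d⌉₊ ∧
          Submodule.span (ZMod 2) ((fun j : Fin m => fun r => M r j) '' ↑S) = ⊤}.ncard : ℝ) := by
  classical
  set k := ⌈(m : ℝ) / d⌉₊
  have hdm : d < m := by
    have hweight := h (Pi.single ⟨0, by omega⟩ 1) (by simp)
    exact hweight.trans_le ((card_filter_le _ _).trans_eq (by simp))
  refine ⟨mul_natCeil_div_lt hd hdm, ?_⟩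
  have hzero : ∀ c ≠ 0, #{j | (Mᵀ *ᵥ c) j = 0} ≤ m - (d + 1) := fun c hc => by
    have hweight := h c hc
    have hsum := card_filter_add_card_filter_not (s := univ) fun j => (Mᵀ *ᵥ c) j ≠ 0
    simp only [not_not, card_univ, Fintype.card_fin] at hsum
    omega
  have hbad := card_filter_span_ne_top_le M (n * k) _ hzero
  have hsplit := ncard_card_eq_and_add_card_filter_not (n * k)
    fun S : Finset (Fin m) => Submodule.span (ZMod 2) ((fun j r => M r j) '' ↑S) = ⊤
  have hbound : (2 : ℝ) ^ n * (m - (d + 1)).choose (n * k) ≤ m.choose (n * k) / 2 :=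
    two_pow_mul_choose_sub_le_half hn hdm (le_natCeil_div_mul m (by omega))
  simp only [ZMod.card, Fintype.card_fin, ne_eq] at hbad hsplit
  have hbadR := (Nat.cast_le (α := ℝ)).mpr hbad
  have hsplitR := congrArg (Nat.cast (R := ℝ)) hsplit
  push_cast at hbadR hsplitR
  linarith
end
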